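/- arXiv:2505.07143 — 5 statements merged into one kernel-verified Lean document; each statement's English description precedes it below -/
import Mathlib

section
/- Let f: ℝⁿ → ℝ be locally Lipschitz and let G be a descent-oriented subdifferential for f. Then a point x̄ ∈ ℝⁿ is a stationary point of f (i.e., 0 ∈ ∂f(x̄)) if and only if there exist sequences ε_k ↓ 0, v_k → 0, and x_k → x̄ such that v_k ∈ G(x_k, ε_k) for all k. -/
open Filter Topology Set
open scoped RealInnerProductSpace NNReal

noncomputable section

variable {E : Type*} [NormedAddCommGroup E] [InnerProductSpace ℝ E]

/-- The Clarke generalized directional derivative of `f` at `x` in direction `d`. -/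
def clarkeDeriv (f : E → ℝ) (x d : E) : ℝ :=
  Filter.limsup (fun p : E × ℝ => (f (p.1 + p.2 • d) - f p.1) / p.2)
    ((𝓝 x) ×ˢ (𝓝[>] (0 : ℝ)))

/-- The Clarke subdifferential of `f` at `x`. -/
def clarkeSubdiff (f : E → ℝ) (x : E) : Set E :=
  {v | ∀ d : E, ⟪v, d⟫ ≤ clarkeDeriv f x d}

/-- Outer limit of `G x ε` along joint sequences `ε_k ↓ 0` and `x_k → x̄`. -/
def SeqJointLimsup (G : E → ℝ → Set E) (xbar : E) : Set E :=
  {u | ∃ (eps : ℕ → ℝ) (xs : ℕ → E) (vs : ℕ → E),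
    (∀ k, 0 < eps k) ∧ Tendsto eps atTop (𝓝 0) ∧ Tendsto xs atTop (𝓝 xbar) ∧
    (∀ k, vs k ∈ G (xs k) (eps k)) ∧ Tendsto vs atTop (𝓝 u)}

/-- Outer limit `limsup_{x → xbar} S x` of a set-valued map. -/
def SetMapLimsup (S : E → Set E) (xbar : E) : Set E :=
  {u | ∃ (xs : ℕ → E) (vs : ℕ → E),
    Tendsto xs atTop (𝓝 xbar) ∧ (∀ k, vs k ∈ S (xs k)) ∧ Tendsto vs atTop (𝓝 u)}

/-- Outer limit of a family of sets `A ε` as `ε ↓ 0`. -/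
def FamilyOuterLimit (A : ℝ → Set E) : Set E :=
  {u | ∃ (eps : ℕ → ℝ) (vs : ℕ → E), (∀ k, 0 < eps k) ∧ Tendsto eps atTop (𝓝 0) ∧
    (∀ k, vs k ∈ A (eps k)) ∧ Tendsto vs atTop (𝓝 u)}

/-- Inner limit of a family of sets `A ε` as `ε ↓ 0`. -/
def FamilyInnerLimit (A : ℝ → Set E) : Set E :=
  {u | ∀ eps : ℕ → ℝ, (∀ k, 0 < eps k) → Tendsto eps atTop (𝓝 0) →
    ∃ vs : ℕ → E, (∀ᶠ k in atTop, vs k ∈ A (eps k)) ∧ Tendsto vs atTop (𝓝 u)}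

/-- Painlevé–Kuratowski convergence of the family `A ε` to the set `B` as `ε ↓ 0`. -/
def PKTendsto (A : ℝ → Set E) (B : Set E) : Prop :=
  FamilyOuterLimit A ⊆ B ∧ B ⊆ FamilyInnerLimit A

/-- `g` is the minimal-norm element of `S`. -/
def IsMinNormElt (S : Set E) (g : E) : Prop :=
  g ∈ S ∧ ∀ v ∈ S, ‖g‖ ≤ ‖v‖

/-- A descent-oriented subdifferential for `f`:  for each fixed `ε > 0` the map
`x ↦ G x ε` is closed-valued and locally bounded, (G1) the joint outer limit as
`ε ↓ 0`, `x → x̄` is contained in the Clarke subdifferential, and (G2) the sets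
`limsup_{x → x̄} G x ε` converge in the Painlevé–Kuratowski sense, as `ε ↓ 0`,
to the singleton consisting of the minimal-norm Clarke subgradient. -/
structure IsDescentOrientedSubdiff (f : E → ℝ) (G : E → ℝ → Set E) : Prop where
  closedVals : ∀ ε : ℝ, 0 < ε → ∀ x : E, IsClosed (G x ε)
  locBounded : ∀ ε : ℝ, 0 < ε → ∀ x : E,
    ∃ δ > (0 : ℝ), ∃ M : ℝ, ∀ y : E, ‖y - x‖ < δ → ∀ v ∈ G y ε, ‖v‖ ≤ M
  outerClarke : ∀ xbar : E, SeqJointLimsup G xbar ⊆ clarkeSubdiff f xbar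
  minNormLimit : ∀ xbar : E, ∃ g : E, IsMinNormElt (clarkeSubdiff f xbar) g ∧
    PKTendsto (fun ε => SetMapLimsup (fun x => G x ε) xbar) {g}

/-- characterization of stationary points via a descent-oriented
subdifferential: `x̄` is a stationary point of `f` iff there are sequences
`ε_k ↓ 0`, `v_k → 0` and `x_k → x̄` with `v_k ∈ G (x_k, ε_k)` for all `k`. -/
theorem stationary_iff_descentOriented_null_sequences {n : ℕ}
    (f : EuclideanSpace ℝ (Fin n) → ℝ) (hf : LocallyLipschitz f)
    (G : EuclideanSpace ℝ (Fin n) → ℝ → Set (EuclideanSpace ℝ (Fin n)))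
    (hG : IsDescentOrientedSubdiff f G) (xbar : EuclideanSpace ℝ (Fin n)) :
    (0 : EuclideanSpace ℝ (Fin n)) ∈ clarkeSubdiff f xbar ↔
      ∃ (eps : ℕ → ℝ) (xs vs : ℕ → EuclideanSpace ℝ (Fin n)),
        (∀ k, 0 < eps k) ∧ Tendsto eps atTop (𝓝 0) ∧
        Tendsto vs atTop (𝓝 0) ∧ Tendsto xs atTop (𝓝 xbar) ∧
        ∀ k, vs k ∈ G (xs k) (eps k) := by
  constructor
  · intro h0
    obtain ⟨g, ⟨hgmem, hgmin⟩, houter, hinner⟩ := hG.minNormLimit xbar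
    have hg0 : g = 0 := by
      have := hgmin 0 h0
      simpa using this
    subst hg0
    have h0in : (0 : EuclideanSpace ℝ (Fin n)) ∈
        FamilyInnerLimit (fun ε => SetMapLimsup (fun x => G x ε) xbar) :=
      hinner rfl
    set ε : ℕ → ℝ := fun k => 1 / (k + 1) with hε
    have hεpos : ∀ k, 0 < ε k := fun k => by positivity
    have hεt : Tendsto ε atTop (𝓝 0) := tendsto_one_div_add_atTop_nhds_zero_nat
    obtain ⟨vs, hvsmem, hvst⟩ := h0in ε hεpos hεt
    obtain ⟨N, hN⟩ := eventually_atTop.mp hvsmem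
    have key : ∀ k : ℕ, ∃ x w : EuclideanSpace ℝ (Fin n),
        w ∈ G x (ε (k + N)) ∧ dist x xbar < ε (k + N) ∧ dist w (vs (k + N)) < ε (k + N) := by
      intro k
      obtain ⟨xs, ws, hxst, hwsm, hwst⟩ := hN (k + N) (Nat.le_add_left N k)
      have h1 := (Metric.tendsto_atTop.mp hxst) (ε (k + N)) (hεpos _)
      have h2 := (Metric.tendsto_atTop.mp hwst) (ε (k + N)) (hεpos _)
      obtain ⟨J1, hJ1⟩ := h1
      obtain ⟨J2, hJ2⟩ := h2
      exact ⟨xs (max J1 J2), ws (max J1 J2), hwsm _,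
        hJ1 _ (le_max_left _ _), hJ2 _ (le_max_right _ _)⟩
    choose X W hWmem hXd hWd using key
    have hε' : Tendsto (fun k => ε (k + N)) atTop (𝓝 0) :=
      hεt.comp (tendsto_add_atTop_nat N)
    refine ⟨fun k => ε (k + N), X, W, fun k => hεpos _, hε', ?_, ?_, hWmem⟩
    · have hvs' : Tendsto (fun k => vs (k + N)) atTop (𝓝 0) :=
        hvst.comp (tendsto_add_atTop_nat N)
      have hd : Tendsto (fun k => dist (W k) 0) atTop (𝓝 0) := by
        have hle : ∀ k, dist (W k) 0 ≤ ε (k + N) + dist (vs (k + N)) 0 := fun k =>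
          (dist_triangle (W k) (vs (k + N)) 0).trans
            (add_le_add (le_of_lt (hWd k)) le_rfl)
        have hub : Tendsto (fun k => ε (k + N) + dist (vs (k + N)) 0) atTop (𝓝 0) := by
          have := hε'.add (tendsto_iff_dist_tendsto_zero.mp hvs')
          simpa using this
        exact squeeze_zero (fun k => dist_nonneg) hle hub
      exact tendsto_iff_dist_tendsto_zero.mpr hd
    · have hd : Tendsto (fun k => dist (X k) xbar) atTop (𝓝 0) :=
        squeeze_zero (fun k => dist_nonneg) (fun k => le_of_lt (hXd k)) hε'
      exact tendsto_iff_dist_tendsto_zero.mpr hd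
  · rintro ⟨eps, xs, vs, hpos, heps, hvs0, hxs, hmem⟩
    exact hG.outerClarke xbar ⟨eps, xs, vs, hpos, heps, hxs, hmem, hvs0⟩
end
end

section
/- Let f: ℝⁿ → ℝ be locally Lipschitz. Then the single-valued map G: ℝⁿ × (0,∞) → ℝⁿ defined by letting G(x, ε) be the (unique) minimal-norm element of the Goldstein ε-subdifferential ∂ᴳ_ε f(x) is a descent-oriented subdifferential for f. -/
open Filter Topology Set
open scoped RealInnerProductSpace NNReal

noncomputable section

variable {E : Type*} [NormedAddCommGroup E] [InnerProductSpace ℝ E]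

/-- The Goldstein `ε`-subdifferential of `f` at `x`. -/
def goldsteinSubdiff (f : E → ℝ) (x : E) (ε : ℝ) : Set E :=
  convexHull ℝ (⋃ z ∈ Metric.closedBall x ε, clarkeSubdiff f z)

/-- The set of minimal-norm elements of a set `S`. -/
def minNormSet (S : Set E) : Set E :=
  {v ∈ S | ∀ w ∈ S, ‖v‖ ≤ ‖w‖}

/-!
The Clarke derivative of a locally Lipschitz `f` is sublinear in the direction, so `∂f x` is
nonempty by Hahn–Banach, and it is upper semicontinuous in the base point. The latter is what
makes Goldstein sets stable: if `a > f°(x̄; d)`, then for `x` near `x̄` and small `ε` every `∂f z`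
with `‖z - x‖ ≤ ε` lies in the half-space `⟪·, d⟫ ≤ a`, hence so does their convex hull. Thus
limits of elements of `∂ᴳ_{ε_k} f(x_k)` with `ε_k → 0`, `x_k → x̄` are Clarke subgradients at `x̄`.
In finite dimension Carathéodory makes the Goldstein sets compact, so they have a unique
minimal-norm element. As soon as `‖x - x̄‖ ≤ ε`, the set `∂ᴳ_ε f(x)` contains `∂f x̄`, so its
minimal-norm element is no longer than the minimal-norm Clarke subgradient `g`; every limit is
therefore a Clarke subgradient of norm at most `‖g‖`, i.e. equal to `g`.
-/

open Metric

theorem IsCompact.isCompact_convexHull {V : Type*} [AddCommGroup V] [Module ℝ V]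
    [TopologicalSpace V] [IsTopologicalAddGroup V] [ContinuousSMul ℝ V] [FiniteDimensional ℝ V]
    {s : Set V} (hs : IsCompact s) : IsCompact (convexHull ℝ s) := by
  classical
  rcases s.eq_empty_or_nonempty with rfl | ⟨x₀, hx₀⟩
  · simp
  let m := Module.finrank ℝ V + 1
  let T : (Fin m → ℝ) × (Fin m → V) → V := fun p => ∑ i, p.1 i • p.2 i
  suffices T '' (stdSimplex ℝ (Fin m) ×ˢ univ.pi fun _ => s) = convexHull ℝ s by
    rw [← this]
    exact ((isCompact_stdSimplex ℝ (Fin m)).prod (isCompact_univ_pi fun _ => hs)).image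
      (by fun_prop)
  refine Subset.antisymm ?_ fun x hx => ?_
  · rintro - ⟨⟨w, z⟩, ⟨⟨hw₀, hw₁⟩, hz⟩, rfl⟩
    exact (convex_convexHull ℝ s).sum_mem (fun i _ => hw₀ i) hw₁
      fun i _ => subset_convexHull ℝ s (hz i (mem_univ i))
  -- Carathéodory: `x` is a convex combination of affinely independent, hence at most `m`,
  -- points of `s`; pad the combination with zero weights to `m` terms.
  obtain ⟨ι, _, z, w, hzs, hind, hw₀, hw₁, rfl⟩ := eq_pos_convex_span_of_mem_convexHull hx
  have hcard : Fintype.card ι ≤ m :=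
    hind.card_le_finrank_succ.trans (Nat.succ_le_succ (Submodule.finrank_le _))
  obtain ⟨e⟩ := Function.Embedding.nonempty_of_card_le (hcard.trans (Fintype.card_fin m).ge)
  let w' := Function.extend e w 0
  let z' := Function.extend e z fun _ => x₀
  have hw' : ∀ i ∉ range e, w' i = 0 := fun i hi => Function.extend_apply' _ _ _ fun h => hi h
  refine ⟨(w', z'), ⟨⟨fun i => ?_, ?_⟩, fun i _ => ?_⟩, ?_⟩
  · show 0 ≤ Function.extend e w 0 i
    rcases range_extend_subset e w 0 (mem_range_self i) with ⟨j, hj⟩ | ⟨_, _, hj⟩ <;> rw [← hj]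
    exacts [(hw₀ j).le, le_rfl]
  · rw [← hw₁]
    exact (Fintype.sum_of_injective e e.injective _ _ hw'
      fun j => (e.injective.extend_apply w 0 j).symm).symm
  · show Function.extend e z (fun _ => x₀) i ∈ s
    rcases range_extend_subset e z _ (mem_range_self i) with ⟨j, hj⟩ | ⟨_, _, hj⟩ <;> rw [← hj]
    exacts [hzs (mem_range_self j), hx₀]
  · refine (Fintype.sum_of_injective e e.injective _ _ (fun i hi => ?_) fun j => ?_).symm
    · simp only [hw' i hi, zero_smul]
    · simp only [w', z', e.injective.extend_apply]

def clarkeQuot (f : E → ℝ) (d : E) (p : E × ℝ) : ℝ :=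
  (f (p.1 + p.2 • d) - f p.1) / p.2

abbrev clarkeFilter {X : Type*} [TopologicalSpace X] (x : X) : Filter (X × ℝ) :=
  𝓝 x ×ˢ 𝓝[>] 0

section Clarke

variable {f : E → ℝ} {x : E}

theorem clarkeDeriv_eq_limsup (f : E → ℝ) (x d : E) :
    clarkeDeriv f x d = limsup (clarkeQuot f d) (clarkeFilter x) := rfl

theorem tendsto_add_smul_clarkeFilter (x d : E) :
    Tendsto (fun p : E × ℝ => p.1 + p.2 • d) (clarkeFilter x) (𝓝 x) := by
  simpa using (tendsto_fst (g := 𝓝[>] (0 : ℝ))).add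
    ((tendsto_snd.mono_right nhdsWithin_le_nhds).smul_const d)

theorem LipschitzOnWith.eventually_abs_clarkeQuot_le {K : ℝ≥0} {U : Set E}
    (hf : LipschitzOnWith K f U) (hU : U ∈ 𝓝 x) (d : E) :
    ∀ᶠ p in clarkeFilter x, |clarkeQuot f d p| ≤ K * ‖d‖ := by
  filter_upwards [tendsto_fst.eventually hU, (tendsto_add_smul_clarkeFilter x d).eventually hU,
    tendsto_snd.eventually self_mem_nhdsWithin] with p hp hpd (ht : 0 < p.2)
  have := hf.dist_le_mul _ hpd _ hp
  rw [Real.dist_eq, dist_eq_norm, add_sub_cancel_left, norm_smul, Real.norm_of_nonneg ht.le]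
    at this
  rw [clarkeQuot, abs_div, abs_of_pos ht, div_le_iff₀ ht]
  linarith

theorem LocallyLipschitz.isBoundedUnder_abs_clarkeQuot (hf : LocallyLipschitz f) (x d : E) :
    IsBoundedUnder (· ≤ ·) (clarkeFilter x) fun p => |clarkeQuot f d p| := by
  obtain ⟨K, U, hU, hfU⟩ := hf x
  exact isBoundedUnder_of_eventually_le (hfU.eventually_abs_clarkeQuot_le hU d)

theorem LocallyLipschitz.isBoundedUnder_le_clarkeQuot (hf : LocallyLipschitz f) (x d : E) :
    IsBoundedUnder (· ≤ ·) (clarkeFilter x) (clarkeQuot f d) :=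
  (isBoundedUnder_le_abs.1 (hf.isBoundedUnder_abs_clarkeQuot x d)).1

theorem LocallyLipschitz.isBoundedUnder_ge_clarkeQuot (hf : LocallyLipschitz f) (x d : E) :
    IsBoundedUnder (· ≥ ·) (clarkeFilter x) (clarkeQuot f d) :=
  (isBoundedUnder_le_abs.1 (hf.isBoundedUnder_abs_clarkeQuot x d)).2

theorem LipschitzOnWith.clarkeDeriv_le {K : ℝ≥0} {U : Set E} (hf : LipschitzOnWith K f U)
    (hU : U ∈ 𝓝 x) (d : E) : clarkeDeriv f x d ≤ K * ‖d‖ := by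
  have h := hf.eventually_abs_clarkeQuot_le hU d
  exact limsup_le_of_le
    (isCoboundedUnder_le_of_eventually_le _ (h.mono fun p hp => neg_le_of_abs_le hp))
    (h.mono fun p hp => le_of_abs_le hp)

theorem LipschitzOnWith.norm_le_of_mem_clarkeSubdiff {K : ℝ≥0} {U : Set E} {v : E}
    (hf : LipschitzOnWith K f U) (hU : U ∈ 𝓝 x) (hv : v ∈ clarkeSubdiff f x) : ‖v‖ ≤ K := by
  have h := (hv v).trans (hf.clarkeDeriv_le hU v)
  rw [real_inner_self_eq_norm_sq] at h
  nlinarith [norm_nonneg v, K.coe_nonneg]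

theorem map_prodMap_mul_clarkeFilter {X : Type*} [TopologicalSpace X] {c : ℝ} (hc : 0 < c)
    (x : X) :
    map (Prod.map id (c * ·)) (clarkeFilter x) = clarkeFilter x := by
  have h : map (c * ·) (𝓝[>] (0 : ℝ)) = 𝓝[>] 0 := by
    simpa only [comap_mulLeft_nhdsGT_zero hc] using
      map_comap_of_surjective (mul_left_surjective₀ hc.ne') (𝓝[>] (0 : ℝ))
  rw [clarkeFilter, ← prod_map_map_eq', map_id, h]

theorem clarkeQuot_smul {c : ℝ} (hc : 0 < c) (d : E) (p : E × ℝ) :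
    clarkeQuot f (c • d) p = c * clarkeQuot f d (Prod.map id (c * ·) p) := by
  simp only [clarkeQuot, Prod.map_fst, Prod.map_snd, id, smul_smul, mul_comm p.2 c]
  field_simp

theorem LocallyLipschitz.clarkeDeriv_smul (hf : LocallyLipschitz f) {c : ℝ} (hc : 0 < c)
    (x d : E) : clarkeDeriv f x (c • d) = c * clarkeDeriv f x d := by
  rw [clarkeDeriv_eq_limsup, clarkeDeriv_eq_limsup, funext (clarkeQuot_smul hc d)]
  change limsup (((c * ·) ∘ clarkeQuot f d) ∘ Prod.map id (c * ·)) _ = _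
  rw [limsup_comp ((c * ·) ∘ clarkeQuot f d) (Prod.map id (c * ·)),
    map_prodMap_mul_clarkeFilter hc x,
    (monotone_mul_left_of_nonneg hc.le).map_limsup_of_continuousAt _
      (continuous_const_mul c).continuousAt (hf.isBoundedUnder_le_clarkeQuot x d)
      (hf.isBoundedUnder_ge_clarkeQuot x d).isCoboundedUnder_le]

theorem clarkeQuot_add (d₁ d₂ : E) (p : E × ℝ) :
    clarkeQuot f (d₁ + d₂) p = clarkeQuot f d₁ p + clarkeQuot f d₂ (p.1 + p.2 • d₁, p.2) := by
  simp only [clarkeQuot, smul_add, add_assoc]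
  ring

theorem LocallyLipschitz.clarkeDeriv_add_le (hf : LocallyLipschitz f) (x d₁ d₂ : E) :
    clarkeDeriv f x (d₁ + d₂) ≤ clarkeDeriv f x d₁ + clarkeDeriv f x d₂ := by
  let s (p : E × ℝ) : E × ℝ := (p.1 + p.2 • d₁, p.2)
  have hs : Tendsto s (clarkeFilter x) (clarkeFilter x) :=
    (tendsto_add_smul_clarkeFilter x d₁).prodMk tendsto_snd
  have hb₂ := isBoundedUnder_le_abs.1 ((hf.isBoundedUnder_abs_clarkeQuot x d₂).mono hs)
  rw [clarkeDeriv_eq_limsup, funext (clarkeQuot_add d₁ d₂)]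
  calc _ ≤ limsup (clarkeQuot f d₁) (clarkeFilter x)
          + limsup (clarkeQuot f d₂ ∘ s) (clarkeFilter x) :=
        limsup_add_le (hf.isBoundedUnder_ge_clarkeQuot x d₁)
          (hf.isBoundedUnder_le_clarkeQuot x d₁) hb₂.2.isCoboundedUnder_le hb₂.1
    _ ≤ _ := add_le_add_right (hs.limsup_comp_le_limsup hb₂.2.isCoboundedUnder_le
          (hf.isBoundedUnder_le_clarkeQuot x d₂)) _

theorem LocallyLipschitz.upperSemicontinuous_clarkeDeriv (hf : LocallyLipschitz f) (d : E) :
    UpperSemicontinuous fun x => clarkeDeriv f x d := by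
  intro x a ha
  obtain ⟨b, hb, hba⟩ := exists_between ha
  have hev := eventually_lt_of_limsup_lt hb (hf.isBoundedUnder_le_clarkeQuot x d)
  obtain ⟨U, hU, T, hT, hUT⟩ := mem_prod_iff.1 hev
  filter_upwards [eventually_mem_nhds_iff.2 hU] with z hz
  refine (limsup_le_of_le (hf.isBoundedUnder_ge_clarkeQuot z d).isCoboundedUnder_le ?_).trans_lt
    hba
  filter_upwards [prod_mem_prod hz hT] with p hp using (hUT hp).le

theorem convex_halfSpace_inner_le (d : E) (a : ℝ) : Convex ℝ {v : E | ⟪v, d⟫ ≤ a} :=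
  convex_halfSpace_le ⟨fun v w => inner_add_left v w d, fun c v => real_inner_smul_left v d c⟩ a

theorem clarkeSubdiff_eq_iInter (f : E → ℝ) (x : E) :
    clarkeSubdiff f x = ⋂ d, {v | ⟪v, d⟫ ≤ clarkeDeriv f x d} :=
  ofPred_forall _

theorem convex_clarkeSubdiff (f : E → ℝ) (x : E) : Convex ℝ (clarkeSubdiff f x) := by
  rw [clarkeSubdiff_eq_iInter]
  exact convex_iInter fun d => convex_halfSpace_inner_le d _

theorem isClosed_clarkeSubdiff (f : E → ℝ) (x : E) : IsClosed (clarkeSubdiff f x) := by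
  rw [clarkeSubdiff_eq_iInter]
  exact isClosed_iInter fun d => isClosed_le (continuous_id.inner continuous_const)
    continuous_const

theorem LocallyLipschitz.clarkeSubdiff_nonempty [CompleteSpace E] (hf : LocallyLipschitz f)
    (x : E) : (clarkeSubdiff f x).Nonempty := by
  obtain ⟨K, U, hU, hfU⟩ := hf x
  have hzero : clarkeDeriv f x 0 = 0 := by
    have := hf.clarkeDeriv_smul two_pos x 0
    rw [smul_zero] at this
    linarith
  obtain ⟨g, -, hg⟩ := exists_extension_of_le_sublinear ((0 : E →ₗ[ℝ] ℝ).toPMap ⊥)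
    (clarkeDeriv f x) (fun c hc d => hf.clarkeDeriv_smul hc x d) (hf.clarkeDeriv_add_le x)
    fun ⟨y, hy⟩ => by simp [(Submodule.mem_bot ℝ).1 hy, hzero]
  have hgK : ∀ d, ‖g d‖ ≤ K * ‖d‖ := fun d => by
    have h₁ := (hg d).trans (hfU.clarkeDeriv_le hU d)
    have h₂ := (hg (-d)).trans (hfU.clarkeDeriv_le hU (-d))
    rw [map_neg, norm_neg] at h₂
    exact abs_le.2 ⟨by linarith, h₁⟩
  refine ⟨(InnerProductSpace.toDual ℝ E).symm (g.mkContinuous K hgK), fun d => ?_⟩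
  rw [InnerProductSpace.toDual_symm_apply]
  exact hg d

theorem LocallyLipschitz.exists_bound_clarkeSubdiff (hf : LocallyLipschitz f) {S : Set E}
    (hS : IsCompact S) : ∃ K : ℝ, ∀ z ∈ S, ∀ v ∈ clarkeSubdiff f z, ‖v‖ ≤ K := by
  choose K U hU hfU using hf
  obtain ⟨t, -, hcover⟩ := hS.elim_nhds_subcover (fun z => interior (U z))
    fun z _ => interior_mem_nhds.2 (hU z)
  refine ⟨(t.sup K : ℝ≥0), fun z hz v hv => ?_⟩
  obtain ⟨y, hy, hzy⟩ := mem_iUnion₂.1 (hcover hz)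
  exact ((hfU y).mono interior_subset |>.norm_le_of_mem_clarkeSubdiff
    (isOpen_interior.mem_nhds hzy) hv).trans (mod_cast Finset.le_sup hy)

theorem LocallyLipschitz.isCompact_clarkeSubdiff [ProperSpace E] (hf : LocallyLipschitz f)
    (x : E) : IsCompact (clarkeSubdiff f x) := by
  obtain ⟨K, U, hU, hfU⟩ := hf x
  exact isCompact_of_isClosed_isBounded (isClosed_clarkeSubdiff f x)
    (isBounded_iff_forall_norm_le.2 ⟨K, fun v hv => hfU.norm_le_of_mem_clarkeSubdiff hU hv⟩)

end Clarke

section MinNorm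

variable {S : Set E}

theorem minNormSet_subsingleton (hS : Convex ℝ S) : (minNormSet S).Subsingleton := by
  rintro u ⟨hu, hu_min⟩ v ⟨hv, hv_min⟩
  have hnorm : ‖u‖ = ‖v‖ := (hu_min v hv).antisymm (hv_min u hu)
  by_contra huv
  have hmid : (1 / 2 : ℝ) • (u + v) ∈ S := by
    simpa only [smul_add] using hS hu hv (by norm_num) (by norm_num) (by norm_num)
  exact ((norm_midpoint_lt_iff hnorm).2 huv).not_ge (hu_min _ hmid)

theorem existsUnique_mem_minNormSet (hS : Convex ℝ S) (hc : IsCompact S) (hne : S.Nonempty) :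
    ∃! v, v ∈ minNormSet S := by
  obtain ⟨v, hv, hmin⟩ := hc.exists_isMinOn hne continuous_norm.continuousOn
  have hv' : v ∈ minNormSet S := ⟨hv, fun w hw => hmin hw⟩
  exact ⟨v, hv', fun u hu => minNormSet_subsingleton hS hu hv'⟩

theorem eq_of_mem_minNormSet_of_norm_le (hS : Convex ℝ S) {g u : E} (hg : g ∈ minNormSet S)
    (hu : u ∈ S) (hug : ‖u‖ ≤ ‖g‖) : u = g :=
  minNormSet_subsingleton hS ⟨hu, fun w hw => hug.trans (hg.2 w hw)⟩ hg

end MinNorm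

section Goldstein

variable {f : E → ℝ} {x : E} {ε : ℝ}

theorem clarkeSubdiff_subset_goldsteinSubdiff {z : E} (hz : z ∈ closedBall x ε) :
    clarkeSubdiff f z ⊆ goldsteinSubdiff f x ε :=
  fun _ hv => subset_convexHull ℝ _ (mem_iUnion₂.2 ⟨z, hz, hv⟩)

theorem goldsteinSubdiff_mono {y : E} {δ : ℝ} (h : closedBall y δ ⊆ closedBall x ε) :
    goldsteinSubdiff f y δ ⊆ goldsteinSubdiff f x ε :=
  convexHull_mono (biUnion_subset_biUnion_left h)

theorem goldsteinSubdiff_subset {C : Set E} (hC : Convex ℝ C)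
    (h : ∀ z ∈ closedBall x ε, clarkeSubdiff f z ⊆ C) : goldsteinSubdiff f x ε ⊆ C :=
  convexHull_min (iUnion₂_subset h) hC

theorem LocallyLipschitz.mem_clarkeSubdiff_of_tendsto (hf : LocallyLipschitz f) {u : E}
    {εs : ℕ → ℝ} {xs vs : ℕ → E} (hεs : Tendsto εs atTop (𝓝 0)) (hxs : Tendsto xs atTop (𝓝 x))
    (hvs : ∀ k, vs k ∈ goldsteinSubdiff f (xs k) (εs k)) (hu : Tendsto vs atTop (𝓝 u)) :
    u ∈ clarkeSubdiff f x := by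
  intro d
  refine le_of_forall_gt_imp_ge_of_dense fun a ha => ?_
  obtain ⟨δ, hδ, hball⟩ :=
    eventually_nhds_iff_ball.1 (hf.upperSemicontinuous_clarkeDeriv d x a ha)
  have hsub : ∀ᶠ k in atTop, closedBall (xs k) (εs k) ⊆ ball x δ := by
    have := hεs.add (tendsto_iff_dist_tendsto_zero.1 hxs)
    rw [add_zero] at this
    exact (this.eventually (gt_mem_nhds hδ)).mono fun k hk => closedBall_subset_ball' hk
  refine le_of_tendsto (hu.inner tendsto_const_nhds) (hsub.mono fun k hk => ?_)
  exact goldsteinSubdiff_subset (convex_halfSpace_inner_le d a)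
    (fun z hz v hv => (hv d).trans (hball z (hk hz)).le) (hvs k)

theorem LocallyLipschitz.isClosed_biUnion_clarkeSubdiff (hf : LocallyLipschitz f) {S : Set E}
    (hS : IsCompact S) : IsClosed (⋃ z ∈ S, clarkeSubdiff f z) := by
  refine IsSeqClosed.isClosed fun ws w hws hw => ?_
  choose zs hzs hwzs using fun k => mem_iUnion₂.1 (hws k)
  obtain ⟨z, hz, φ, hφ, hzφ⟩ := hS.tendsto_subseq hzs
  exact mem_iUnion₂.2 ⟨z, hz, hf.mem_clarkeSubdiff_of_tendsto tendsto_const_nhds hzφ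
    (fun k => clarkeSubdiff_subset_goldsteinSubdiff (mem_closedBall_self le_rfl) (hwzs (φ k)))
    (hw.comp hφ.tendsto_atTop)⟩

theorem goldsteinSubdiff_subset_closedBall {K : ℝ}
    (hK : ∀ z ∈ closedBall x ε, ∀ v ∈ clarkeSubdiff f z, ‖v‖ ≤ K) :
    goldsteinSubdiff f x ε ⊆ closedBall 0 K :=
  goldsteinSubdiff_subset (convex_closedBall 0 K) fun z hz v hv =>
    mem_closedBall_zero_iff.2 (hK z hz v hv)

theorem LocallyLipschitz.isCompact_goldsteinSubdiff [FiniteDimensional ℝ E]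
    (hf : LocallyLipschitz f) (x : E) (ε : ℝ) : IsCompact (goldsteinSubdiff f x ε) := by
  obtain ⟨K, hK⟩ := hf.exists_bound_clarkeSubdiff (isCompact_closedBall x ε)
  refine IsCompact.isCompact_convexHull (isCompact_of_isClosed_isBounded
    (hf.isClosed_biUnion_clarkeSubdiff (isCompact_closedBall x ε)) ?_)
  exact isBounded_closedBall.subset
    ((subset_convexHull ℝ _).trans (goldsteinSubdiff_subset_closedBall hK))

theorem LocallyLipschitz.existsUnique_mem_minNormSet_goldsteinSubdiff [FiniteDimensional ℝ E]
    (hf : LocallyLipschitz f) (x : E) (hε : 0 ≤ ε) :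
    ∃! v, v ∈ minNormSet (goldsteinSubdiff f x ε) :=
  existsUnique_mem_minNormSet (convex_convexHull ℝ _) (hf.isCompact_goldsteinSubdiff x ε)
    ((hf.clarkeSubdiff_nonempty x).mono
      (clarkeSubdiff_subset_goldsteinSubdiff (mem_closedBall_self hε)))

end Goldstein

section DescentOriented

variable {f : E → ℝ} {xbar g : E}

theorem self_subset_setMapLimsup {X : Type*} [NormedAddCommGroup X] (S : X → Set X) (x : X) :
    S x ⊆ SetMapLimsup S x :=
  fun v hv => ⟨fun _ => x, fun _ => v, tendsto_const_nhds, fun _ => hv, tendsto_const_nhds⟩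

theorem LocallyLipschitz.eq_of_tendsto_goldsteinSubdiff (hf : LocallyLipschitz f)
    (hg : g ∈ minNormSet (clarkeSubdiff f xbar)) {η : ℕ → ℝ} {vs : ℕ → E} {u : E}
    (hη : Tendsto η atTop (𝓝 0)) (hvs : ∀ k, vs k ∈ goldsteinSubdiff f xbar (η k))
    (hnorm : ∀ k, ‖vs k‖ ≤ ‖g‖) (hu : Tendsto vs atTop (𝓝 u)) : u = g :=
  eq_of_mem_minNormSet_of_norm_le (convex_clarkeSubdiff f xbar) hg
    (hf.mem_clarkeSubdiff_of_tendsto hη tendsto_const_nhds hvs hu)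
    (le_of_tendsto' hu.norm hnorm)

variable [FiniteDimensional ℝ E]

theorem LocallyLipschitz.setMapLimsup_minNormSet_goldsteinSubdiff_subset
    (hf : LocallyLipschitz f) {ε : ℝ} (hε : 0 < ε) :
    SetMapLimsup (fun x => minNormSet (goldsteinSubdiff f x ε)) xbar ⊆
      goldsteinSubdiff f xbar (2 * ε) ∩ {u | ∀ w ∈ clarkeSubdiff f xbar, ‖u‖ ≤ ‖w‖} := by
  rintro u ⟨xs, vs, hxs, hvs, hu⟩
  have hnear : ∀ᶠ k in atTop, dist (xs k) xbar ≤ ε :=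
    hxs.eventually (closedBall_mem_nhds xbar hε)
  refine ⟨(hf.isCompact_goldsteinSubdiff xbar (2 * ε)).isClosed.mem_of_tendsto hu
    (hnear.mono fun k hk => goldsteinSubdiff_mono ?_ (hvs k).1), fun w hw => ?_⟩
  · exact closedBall_subset_closedBall' (by linarith)
  · exact le_of_tendsto hu.norm (hnear.mono fun k hk => (hvs k).2 w
      (clarkeSubdiff_subset_goldsteinSubdiff (mem_closedBall_comm.1 hk) hw))

theorem LocallyLipschitz.familyOuterLimit_subset (hf : LocallyLipschitz f)
    (hg : g ∈ minNormSet (clarkeSubdiff f xbar)) :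
    FamilyOuterLimit (fun ε => SetMapLimsup (fun x => minNormSet (goldsteinSubdiff f x ε)) xbar)
      ⊆ {g} := by
  rintro u ⟨εs, vs, hεs₀, hεs, hvs, hu⟩
  have h k := hf.setMapLimsup_minNormSet_goldsteinSubdiff_subset (hεs₀ k) (hvs k)
  exact hf.eq_of_tendsto_goldsteinSubdiff hg (by simpa using hεs.const_mul 2)
    (fun k => (h k).1) (fun k => (h k).2 g hg.1) hu

theorem LocallyLipschitz.subset_familyInnerLimit (hf : LocallyLipschitz f)
    (hg : g ∈ minNormSet (clarkeSubdiff f xbar)) :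
    {g} ⊆ FamilyInnerLimit
      (fun ε => SetMapLimsup (fun x => minNormSet (goldsteinSubdiff f x ε)) xbar) := by
  intro v hv εs hεs₀ hεs
  rw [mem_singleton_iff.1 hv]
  choose vs hvs using fun k =>
    (hf.existsUnique_mem_minNormSet_goldsteinSubdiff xbar (hεs₀ k).le).exists
  have hnorm k : ‖vs k‖ ≤ ‖g‖ :=
    (hvs k).2 g (clarkeSubdiff_subset_goldsteinSubdiff (mem_closedBall_self (hεs₀ k).le) hg.1)
  refine ⟨vs, .of_forall fun k => self_subset_setMapLimsup _ xbar (hvs k), ?_⟩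
  refine (isCompact_closedBall (0 : E) ‖g‖).tendsto_nhds_of_unique_mapClusterPt
    (.of_forall fun k => mem_closedBall_zero_iff.2 (hnorm k)) fun a _ ha => ?_
  obtain ⟨ψ, hψ, hvsψ⟩ := ha.tendsto_subseq
  exact hf.eq_of_tendsto_goldsteinSubdiff hg (hεs.comp hψ.tendsto_atTop)
    (fun k => (hvs (ψ k)).1) (fun k => hnorm (ψ k)) hvsψ

end DescentOriented

/-- for locally Lipschitz `f`, the map sending `(x, ε)` to the
(unique) minimal-norm element of the Goldstein `ε`-subdifferential is a
descent-oriented subdifferential for `f`. -/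
theorem goldstein_minNorm_descentOriented {n : ℕ}
    (f : EuclideanSpace ℝ (Fin n) → ℝ) (hf : LocallyLipschitz f) :
    (∀ (x : EuclideanSpace ℝ (Fin n)) (ε : ℝ), 0 < ε →
      ∃! v : EuclideanSpace ℝ (Fin n), v ∈ minNormSet (goldsteinSubdiff f x ε)) ∧
    IsDescentOrientedSubdiff f (fun x ε => minNormSet (goldsteinSubdiff f x ε)) := by
  refine ⟨fun x ε hε => hf.existsUnique_mem_minNormSet_goldsteinSubdiff x hε.le,
    fun ε _ x => (minNormSet_subsingleton (convex_convexHull ℝ _)).isClosed,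
    fun ε _ x => ?_, fun xbar => ?_, fun xbar => ?_⟩
  · obtain ⟨K, hK⟩ := hf.exists_bound_clarkeSubdiff (isCompact_closedBall x (ε + 1))
    refine ⟨1, one_pos, K, fun y hy v hv => mem_closedBall_zero_iff.1 <|
      goldsteinSubdiff_subset_closedBall (fun z hz => hK z ?_) hv.1⟩
    rw [← dist_eq_norm] at hy
    exact closedBall_subset_closedBall' (by linarith) hz
  · rintro u ⟨εs, xs, vs, -, hεs, hxs, hvs, hu⟩
    exact hf.mem_clarkeSubdiff_of_tendsto hεs hxs (fun k => (hvs k).1) hu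
  · obtain ⟨g, hg, -⟩ := existsUnique_mem_minNormSet (convex_clarkeSubdiff f xbar)
      (hf.isCompact_clarkeSubdiff xbar) (hf.clarkeSubdiff_nonempty xbar)
    exact ⟨g, hg, hf.familyOuterLimit_subset hg, hf.subset_familyInnerLimit hg⟩
end
end

section
/- Let f: ℝⁿ → ℝ be convex (hence locally Lipschitz, and its Clarke subdifferential coincides with the convex subdifferential). Then the single-valued map G: ℝⁿ × (0,∞) → ℝⁿ defined by letting G(x, ε) be the (unique) minimal-norm element of the ε-subdifferential ∂_ε f(x) is a descent-oriented subdifferential for f. -/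
open Filter Topology Set
open scoped RealInnerProductSpace NNReal

noncomputable section

variable {E : Type*} [NormedAddCommGroup E] [InnerProductSpace ℝ E]

/-- The `ε`-subdifferential of a convex function `f` at `x`. -/
def epsSubdiff (f : E → ℝ) (x : E) (ε : ℝ) : Set E :=
  {v | ∀ z : E, f x + ⟪v, z - x⟫ - ε ≤ f z}

/-! ### Auxiliary lemmas -/

section Aux

variable {f : E → ℝ}

lemma convexOn_univ_continuous [FiniteDimensional ℝ E]
    (hf : ConvexOn ℝ Set.univ f) : Continuous f := by
  exact continuousOn_univ.mp (hf.continuousOn isOpen_univ)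

lemma slope_mono (hf : ConvexOn ℝ Set.univ f) (y d : E) {t s : ℝ}
    (ht : 0 < t) (hts : t ≤ s) :
    (f (y + t • d) - f y) / t ≤ (f (y + s • d) - f y) / s := by
  have hs : 0 < s := ht.trans_le hts
  have ha0 : 0 ≤ 1 - t / s := by
    rw [sub_nonneg]
    exact div_le_one_of_le₀ hts hs.le
  have ha1 : 0 ≤ t / s := by positivity
  have hsum : (1 - t / s) + t / s = 1 := by ring
  have hcomb := hf.2 (Set.mem_univ y) (Set.mem_univ (y + s • d)) ha0 ha1 hsum
  have hpt : (1 - t / s) • y + (t / s) • (y + s • d) = y + t • d := by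
    have h2 : t / s * s = t := div_mul_cancel₀ t hs.ne'
    rw [smul_add, smul_smul, h2]
    module
  rw [hpt, smul_eq_mul, smul_eq_mul] at hcomb
  rw [div_le_div_iff₀ ht hs]
  have h2 : t / s * s = t := div_mul_cancel₀ t hs.ne'
  have h3 : f (y + t • d) - f y ≤ (t / s) * (f (y + s • d) - f y) := by nlinarith
  calc (f (y + t • d) - f y) * s ≤ ((t / s) * (f (y + s • d) - f y)) * s :=
        mul_le_mul_of_nonneg_right h3 hs.le
    _ = (f (y + s • d) - f y) * t := by
        rw [mul_comm (t / s) _, mul_assoc, h2]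

lemma slope_lower (hf : ConvexOn ℝ Set.univ f) (y d : E) {t : ℝ} (ht : 0 < t) :
    f y - f (y - d) ≤ (f (y + t • d) - f y) / t := by
  have h1t : (0:ℝ) < 1 + t := by linarith
  have ha0 : 0 ≤ t / (1 + t) := by positivity
  have ha1 : 0 ≤ 1 / (1 + t) := by positivity
  have hsum : t / (1 + t) + 1 / (1 + t) = 1 := by field_simp; ring
  have hcomb := hf.2 (Set.mem_univ (y - d)) (Set.mem_univ (y + t • d)) ha0 ha1 hsum
  have hpt : (t / (1 + t)) • (y - d) + (1 / (1 + t)) • (y + t • d) = y := by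
    match_scalars <;> (field_simp; try ring)
  rw [hpt, smul_eq_mul, smul_eq_mul] at hcomb
  rw [le_div_iff₀ ht]
  have h2 := mul_le_mul_of_nonneg_right hcomb h1t.le
  have e3 : (t / (1 + t) * f (y - d) + 1 / (1 + t) * f (y + t • d)) * (1 + t)
      = t * f (y - d) + f (y + t • d) := by field_simp; try ring
  rw [e3] at h2
  linarith

lemma epsSubdiff_mono (x : E) {e1 e2 : ℝ} (h : e1 ≤ e2) :
    epsSubdiff f x e1 ⊆ epsSubdiff f x e2 := by
  intro v hv z
  have := hv z
  linarith

lemma convex_epsSubdiff (x : E) (e : ℝ) : Convex ℝ (epsSubdiff f x e) := by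
  intro v hv w hw a b ha hb hab
  intro z
  have h1 : ⟪v, z - x⟫ ≤ f z - f x + e := by have := hv z; linarith
  have h2 : ⟪w, z - x⟫ ≤ f z - f x + e := by have := hw z; linarith
  have hin : ⟪a • v + b • w, z - x⟫ = a * ⟪v, z - x⟫ + b * ⟪w, z - x⟫ := by
    rw [inner_add_left, real_inner_smul_left, real_inner_smul_left]
  rw [hin]
  have hsum : a * (f z - f x + e) + b * (f z - f x + e) = f z - f x + e := by
    rw [← add_mul, hab, one_mul]
  linarith [mul_le_mul_of_nonneg_left h1 ha, mul_le_mul_of_nonneg_left h2 hb]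

lemma isClosed_epsSubdiff (x : E) (e : ℝ) : IsClosed (epsSubdiff f x e) := by
  have h : epsSubdiff f x e = ⋂ z : E, {v : E | f x + ⟪v, z - x⟫ - e ≤ f z} := by
    ext v; simp [epsSubdiff, Set.mem_iInter]
  rw [h]
  refine isClosed_iInter fun z => isClosed_le ?_ continuous_const
  exact (continuous_const.add ((continuous_id.inner continuous_const))).sub continuous_const

lemma isClosed_minNormSet {S : Set E} (hS : IsClosed S) : IsClosed (minNormSet S) := by
  have h : minNormSet S = S ∩ ⋂ w ∈ S, {v : E | ‖v‖ ≤ ‖w‖} := by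
    ext v
    simp [minNormSet, Set.mem_iInter]
  rw [h]
  exact hS.inter (isClosed_biInter fun w _ => isClosed_le continuous_norm continuous_const)

lemma epsSubdiff_limit (hc : Continuous f) {es : ℕ → ℝ} {xs vs : ℕ → E}
    {e : ℝ} {x v : E} (he : Tendsto es atTop (𝓝 e)) (hx : Tendsto xs atTop (𝓝 x))
    (hv : Tendsto vs atTop (𝓝 v)) (hm : ∀ k, vs k ∈ epsSubdiff f (xs k) (es k)) :
    v ∈ epsSubdiff f x e := by
  intro z
  have hlim : Tendsto (fun k => f (xs k) + ⟪vs k, z - xs k⟫ - es k) atTop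
      (𝓝 (f x + ⟪v, z - x⟫ - e)) := by
    refine Tendsto.sub (Tendsto.add ((hc.tendsto x).comp hx) ?_) he
    exact Tendsto.inner hv (tendsto_const_nhds.sub hx)
  exact le_of_tendsto hlim (Eventually.of_forall fun k => hm k z)

lemma epsSubdiff_zero_nonempty [CompleteSpace E] [FiniteDimensional ℝ E]
    (hf : ConvexOn ℝ Set.univ f) (x : E) : (epsSubdiff f x 0).Nonempty := by
  have hc : Continuous f := convexOn_univ_continuous hf
  set S : Set (E × ℝ) := {p | f p.1 < p.2} with hSdef
  have hSconv : Convex ℝ S := by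
    intro p hp q hq a b ha hb hab
    simp only [hSdef, Set.mem_setOf_eq] at hp hq ⊢
    have hcomb := hf.2 (Set.mem_univ p.1) (Set.mem_univ q.1) ha hb hab
    rw [smul_eq_mul, smul_eq_mul] at hcomb
    rcases eq_or_lt_of_le ha with ha0 | ha0
    · have hb1 : b = 1 := by linarith
      rw [← ha0, hb1]
      simpa using hq
    · have h1 : a * f p.1 < a * p.2 := by nlinarith
      have h2 : b * f q.1 ≤ b * q.2 := by nlinarith
      calc f (a • p.1 + b • q.1) ≤ a * f p.1 + b * f q.1 := hcomb
        _ < a * p.2 + b * q.2 := by linarith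
  have hSopen : IsOpen S := isOpen_lt (hc.comp continuous_fst) continuous_snd
  have hxS : ((x, f x) : E × ℝ) ∉ S := by simp [hSdef]
  obtain ⟨phi, hphi⟩ := geometric_hahn_banach_open_point hSconv hSopen hxS
  set c : ℝ := phi (0, 1) with hcdef
  have hdecomp : ∀ (z : E) (r : ℝ), phi (z, r) = phi (z, 0) + r * c := by
    intro z r
    have h1 : ((z, r) : E × ℝ) = (z, 0) + r • ((0 : E), (1 : ℝ)) := by
      simp [Prod.ext_iff]
    rw [h1, map_add, map_smul, smul_eq_mul, hcdef]
  have hkey : ∀ (z : E) (r : ℝ), f z < r →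
      phi (z, 0) + r * c < phi (x, 0) + f x * c := by
    intro z r h
    have h2 := hphi (z, r) h
    rw [hdecomp z r, hdecomp x (f x)] at h2
    exact h2
  have hc0 : c < 0 := by
    by_contra h
    push_neg at h
    have h1 := hkey x (f x + 1) (by linarith)
    nlinarith
  have hineq : ∀ z : E, phi (z, 0) + f z * c ≤ phi (x, 0) + f x * c := by
    intro z
    have h : ∀ η : ℝ, 0 < η → phi (z, 0) + f z * c < phi (x, 0) + f x * c + η * (-c) := by
      intro η hη
      have hk := hkey z (f z + η) (by linarith)
      nlinarith
    by_contra hcon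
    push_neg at hcon
    have hcpos : (0:ℝ) < -c := by linarith
    have hd : 0 < (phi (z, 0) + f z * c - (phi (x, 0) + f x * c)) / (-c) :=
      div_pos (by linarith) hcpos
    have h2 := h _ hd
    have hmul : ((phi (z, 0) + f z * c - (phi (x, 0) + f x * c)) / (-c)) * (-c)
        = phi (z, 0) + f z * c - (phi (x, 0) + f x * c) :=
      div_mul_cancel₀ _ hcpos.ne'
    linarith
  set L : E →L[ℝ] ℝ := (-c)⁻¹ • (phi.comp (ContinuousLinearMap.inl ℝ E ℝ)) with hLdef
  refine ⟨(InnerProductSpace.toDual ℝ E).symm L, ?_⟩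
  intro z
  have hLz : ⟪(InnerProductSpace.toDual ℝ E).symm L, z - x⟫ = (-c)⁻¹ * phi (z - x, 0) := by
    rw [InnerProductSpace.toDual_symm_apply]
    simp [hLdef]
  have hphisub : phi ((z : E), (0:ℝ)) - phi (x, 0) = phi (z - x, 0) := by
    rw [← map_sub]
    norm_num
  have hle : phi (z - x, 0) ≤ (f x - f z) * c := by
    have := hineq z
    rw [← hphisub]
    linarith
  have hpos : (0:ℝ) < -c := by linarith
  rw [hLz]
  have h5 : (-c)⁻¹ * phi (z - x, 0) ≤ (-c)⁻¹ * ((f x - f z) * c) :=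
    mul_le_mul_of_nonneg_left hle (by positivity)
  have hc1 : (-c) * (-c)⁻¹ = 1 := mul_inv_cancel₀ hpos.ne'
  have hcc : (-c)⁻¹ * ((f x - f z) * c) = f z - f x := by
    have : (-c)⁻¹ * ((f x - f z) * c) = -((-c) * (-c)⁻¹) * (f x - f z) := by ring
    rw [this, hc1]
    ring
  rw [hcc] at h5
  linarith

lemma epsSubdiff_nonempty [CompleteSpace E] [FiniteDimensional ℝ E]
    (hf : ConvexOn ℝ Set.univ f) (x : E) {e : ℝ} (he : 0 ≤ e) :
    (epsSubdiff f x e).Nonempty :=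
  (epsSubdiff_zero_nonempty hf x).mono (epsSubdiff_mono x he)

lemma epsSubdiff_norm_bound [ProperSpace E] (hc : Continuous f) (x : E) {e : ℝ}
    (he : 0 ≤ e) {r : ℝ} (hr : 0 < r) :
    ∃ M : ℝ, ∀ y : E, ‖y - x‖ < r → ∀ v ∈ epsSubdiff f y e, ‖v‖ ≤ M := by
  obtain ⟨C, hC⟩ := (isCompact_closedBall x (r + 1)).exists_bound_of_continuousOn
    hc.continuousOn
  refine ⟨2 * C + e, ?_⟩
  intro y hy v hv
  have hyball : y ∈ Metric.closedBall x (r + 1) := by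
    rw [Metric.mem_closedBall, dist_eq_norm]
    linarith
  have hC0 : 0 ≤ C := le_trans (norm_nonneg _) (hC y hyball)
  rcases eq_or_ne v 0 with hv0 | hv0
  · rw [hv0, norm_zero]; linarith
  · have hvn : 0 < ‖v‖ := norm_pos_iff.mpr hv0
    set u : E := ‖v‖⁻¹ • v with hu
    have hun : ‖u‖ = 1 := by
      rw [hu, norm_smul, norm_inv, norm_norm, inv_mul_cancel₀ hvn.ne']
    have huball : y + u ∈ Metric.closedBall x (r + 1) := by
      rw [Metric.mem_closedBall, dist_eq_norm]
      have : ‖y + u - x‖ ≤ ‖y - x‖ + ‖u‖ := by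
        rw [show y + u - x = (y - x) + u by abel]
        exact norm_add_le _ _
      rw [hun] at this
      linarith
    have hineq := hv (y + u)
    rw [show y + u - y = u by abel] at hineq
    have hinner : ⟪v, u⟫ = ‖v‖ := by
      rw [hu, real_inner_smul_right, real_inner_self_eq_norm_mul_norm,
        inv_mul_cancel_left₀ hvn.ne']
    rw [hinner] at hineq
    have h1 : |f (y + u)| ≤ C := by
      simpa [Real.norm_eq_abs] using hC _ huball
    have h2 : |f y| ≤ C := by
      simpa [Real.norm_eq_abs] using hC _ hyball
    have := abs_le.mp h1
    have := abs_le.mp h2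
    linarith [(abs_le.mp h1).2, (abs_le.mp h1).1, (abs_le.mp h2).2, (abs_le.mp h2).1]

lemma minNorm_unique {S : Set E} (hconv : Convex ℝ S) {g w : E}
    (hgS : g ∈ S) (hwS : w ∈ S) (hgm : ∀ u ∈ S, ‖g‖ ≤ ‖u‖) (hwn : ‖w‖ ≤ ‖g‖) :
    w = g := by
  by_contra hne
  set h : E := (1/2 : ℝ) • g + (1/2 : ℝ) • w with hh
  have hhS : h ∈ S := hconv hgS hwS (by norm_num) (by norm_num) (by norm_num)
  have hmin : ‖g‖ ≤ ‖h‖ := hgm h hhS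
  have hpar := parallelogram_law_with_norm ℝ g w
  have hgw : 0 < ‖g - w‖ := by
    rw [norm_pos_iff, sub_ne_zero]
    exact fun hgweq => hne hgweq.symm
  have hnh : ‖h‖ = ‖g + w‖ / 2 := by
    rw [hh, ← smul_add, norm_smul, Real.norm_eq_abs, abs_of_pos (by norm_num : (0:ℝ) < 1/2)]
    ring
  nlinarith [norm_nonneg (g + w), norm_nonneg g, norm_nonneg w]

lemma minNorm_existsUnique [ProperSpace E] {S : Set E} (hne : S.Nonempty)
    (hcl : IsClosed S) (hconv : Convex ℝ S) {M : ℝ} (hbd : ∀ v ∈ S, ‖v‖ ≤ M) :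
    ∃! g : E, g ∈ minNormSet S := by
  have hsub : S ⊆ Metric.closedBall 0 M := fun v hv => by
    rw [Metric.mem_closedBall, dist_zero_right]; exact hbd v hv
  have hcmp : IsCompact S :=
    (isCompact_closedBall (0:E) M).of_isClosed_subset hcl hsub
  obtain ⟨g, hgS, hgm⟩ := hcmp.exists_isMinOn hne (continuous_norm.continuousOn)
  refine ⟨g, ⟨hgS, fun w hw => hgm hw⟩, ?_⟩
  intro w hw
  exact minNorm_unique hconv hgS hw.1 (fun u hu => hgm hu) (hw.2 g hgS)


lemma quot_bound [FiniteDimensional ℝ E] (hf : ConvexOn ℝ Set.univ f) (x d : E) :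
    ∃ K : ℝ, ∀ᶠ p : E × ℝ in (𝓝 x) ×ˢ (𝓝[>] (0:ℝ)),
      |(f (p.1 + p.2 • d) - f p.1) / p.2| ≤ K := by
  have hc := convexOn_univ_continuous hf
  obtain ⟨C, hC⟩ := (isCompact_closedBall x (1 + ‖d‖)).exists_bound_of_continuousOn
    hc.continuousOn
  refine ⟨2 * C, ?_⟩
  have h1 : Metric.ball x 1 ∈ 𝓝 x := Metric.ball_mem_nhds x one_pos
  have h2 : Set.Ioc (0:ℝ) 1 ∈ 𝓝[>] (0:ℝ) := Ioc_mem_nhdsGT_of_mem ⟨le_refl 0, one_pos⟩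
  filter_upwards [Filter.prod_mem_prod h1 h2] with p hp
  obtain ⟨hp1, hp2⟩ := hp
  have ht0 : 0 < p.2 := hp2.1
  have ht1 : p.2 ≤ 1 := hp2.2
  have hyx : dist p.1 x < 1 := hp1
  rw [dist_eq_norm] at hyx
  have hmem : ∀ w : E, ‖w - x‖ ≤ 1 + ‖d‖ → |f w| ≤ C := by
    intro w hw
    have := hC w (by rw [Metric.mem_closedBall, dist_eq_norm]; exact hw)
    simpa [Real.norm_eq_abs] using this
  have hy : |f p.1| ≤ C := hmem p.1 (by have := norm_nonneg d; linarith)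
  have hyd : |f (p.1 + d)| ≤ C := by
    apply hmem
    have : ‖p.1 + d - x‖ ≤ ‖p.1 - x‖ + ‖d‖ := by
      rw [show p.1 + d - x = (p.1 - x) + d by abel]; exact norm_add_le _ _
    linarith
  have hymd : |f (p.1 - d)| ≤ C := by
    apply hmem
    have : ‖p.1 - d - x‖ ≤ ‖p.1 - x‖ + ‖d‖ := by
      rw [show p.1 - d - x = (p.1 - x) + (-d) by abel]
      simpa using norm_add_le (p.1 - x) (-d)
    linarith
  have hub : (f (p.1 + p.2 • d) - f p.1) / p.2 ≤ f (p.1 + d) - f p.1 := by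
    have h := slope_mono hf p.1 d ht0 ht1
    simpa [one_smul] using h
  have hlb : f p.1 - f (p.1 - d) ≤ (f (p.1 + p.2 • d) - f p.1) / p.2 :=
    slope_lower hf p.1 d ht0
  rw [abs_le]
  constructor
  · have := (abs_le.mp hy); have := (abs_le.mp hymd); linarith [(abs_le.mp hy).1,
      (abs_le.mp hy).2, (abs_le.mp hymd).1, (abs_le.mp hymd).2]
  · linarith [(abs_le.mp hy).1, (abs_le.mp hy).2, (abs_le.mp hyd).1, (abs_le.mp hyd).2]

lemma clarkeDeriv_le_slope [FiniteDimensional ℝ E] (hf : ConvexOn ℝ Set.univ f) (x d : E) :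
    clarkeDeriv f x d ≤ f (x + d) - f x := by
  have hc := convexOn_univ_continuous hf
  obtain ⟨K, hK⟩ := quot_bound hf x d
  haveI : ((𝓝 x) ×ˢ (𝓝[>] (0:ℝ))).NeBot := Filter.prod_neBot.mpr ⟨inferInstance, inferInstance⟩
  have hcb : IsCoboundedUnder (· ≤ ·) ((𝓝 x) ×ˢ (𝓝[>] (0:ℝ)))
      (fun p : E × ℝ => (f (p.1 + p.2 • d) - f p.1) / p.2) :=
    isCoboundedUnder_le_of_eventually_le _ (x := -K)
      (by filter_upwards [hK] with p hp; exact (abs_le.mp hp).1)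
  have key : ∀ η : ℝ, 0 < η → clarkeDeriv f x d ≤ f (x + d) - f x + η := by
    intro η hη
    apply limsup_le_of_le hcb
    have hg : Continuous fun y : E => f (y + d) - f y :=
      (hc.comp (continuous_id.add continuous_const)).sub hc
    have hopen : IsOpen {y : E | f (y + d) - f y < f (x + d) - f x + η} :=
      isOpen_lt hg continuous_const
    have h1 : {y : E | f (y + d) - f y < f (x + d) - f x + η} ∈ 𝓝 x :=
      hopen.mem_nhds (by simp only [Set.mem_setOf_eq]; linarith)
    have h2 : Set.Ioc (0:ℝ) 1 ∈ 𝓝[>] (0:ℝ) := Ioc_mem_nhdsGT_of_mem ⟨le_refl 0, one_pos⟩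
    filter_upwards [Filter.prod_mem_prod h1 h2] with p hp
    obtain ⟨hp1, hp2⟩ := hp
    have h := slope_mono hf p.1 d hp2.1 hp2.2
    simp only [one_smul, div_one] at h
    calc (f (p.1 + p.2 • d) - f p.1) / p.2 ≤ f (p.1 + d) - f p.1 := h
      _ ≤ f (x + d) - f x + η := le_of_lt hp1
  by_contra hcon
  push_neg at hcon
  have := key ((clarkeDeriv f x d - (f (x + d) - f x)) / 2) (by linarith)
  linarith

lemma clarkeSubdiff_eq [FiniteDimensional ℝ E] (hf : ConvexOn ℝ Set.univ f) (x : E) :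
    clarkeSubdiff f x = epsSubdiff f x 0 := by
  ext v
  constructor
  · intro hv z
    have h1 := hv (z - x)
    have h2 := clarkeDeriv_le_slope hf x (z - x)
    rw [add_sub_cancel] at h2
    linarith
  · intro hv d
    obtain ⟨K, hK⟩ := quot_bound hf x d
    have hbd : IsBoundedUnder (· ≤ ·) ((𝓝 x) ×ˢ (𝓝[>] (0:ℝ)))
        (fun p : E × ℝ => (f (p.1 + p.2 • d) - f p.1) / p.2) := by
      refine ⟨K, ?_⟩
      rw [Filter.eventually_map]
      filter_upwards [hK] with p hp
      exact (abs_le.mp hp).2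
    apply le_limsup_of_frequently_le ?_ hbd
    rw [Filter.frequently_iff]
    intro U hU
    rw [Filter.mem_prod_iff] at hU
    obtain ⟨s₁, hs₁, s₂, hs₂, hsub⟩ := hU
    have hxs : x ∈ s₁ := mem_of_mem_nhds hs₁
    have hne : (s₂ ∩ Set.Ioi (0:ℝ)).Nonempty :=
      Filter.nonempty_of_mem (Filter.inter_mem hs₂ self_mem_nhdsWithin)
    obtain ⟨t, hts, ht0⟩ := hne
    refine ⟨(x, t), hsub ⟨hxs, hts⟩, ?_⟩
    have h := hv (x + t • d)
    rw [add_sub_cancel_left, real_inner_smul_right] at h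
    rw [le_div_iff₀ ht0]
    have ht0' : (0:ℝ) < t := ht0
    nlinarith

lemma mem_epsSubdiff_near (hc : Continuous f) {xbar v : E}
    (hv : v ∈ epsSubdiff f xbar 0) {e : ℝ} (he : 0 < e) :
    ∃ δ : ℝ, 0 < δ ∧ ∀ y : E, ‖y - xbar‖ < δ → v ∈ epsSubdiff f y e := by
  obtain ⟨δ₁, hδ₁0, hδ₁⟩ := Metric.continuousAt_iff.mp (hc.continuousAt (x := xbar))
    (e / 2) (by linarith)
  set δ₂ : ℝ := e / (2 * (‖v‖ + 1)) with hδ₂def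
  have hδ₂0 : 0 < δ₂ := by positivity
  refine ⟨min δ₁ δ₂, lt_min hδ₁0 hδ₂0, ?_⟩
  intro y hy z
  have hyd : dist y xbar < δ₁ := by
    rw [dist_eq_norm]; exact lt_of_lt_of_le hy (min_le_left _ _)
  have hfy : |f y - f xbar| < e / 2 := by
    have := hδ₁ hyd; rwa [Real.dist_eq] at this
  have hiv : |⟪v, y - xbar⟫| ≤ ‖v‖ * ‖y - xbar‖ := abs_real_inner_le_norm v _
  have hyv : ‖v‖ * ‖y - xbar‖ ≤ e / 2 := by
    have hy2 : ‖y - xbar‖ ≤ δ₂ := le_trans hy.le (min_le_right _ _)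
    have hm1 : ‖v‖ * ‖y - xbar‖ ≤ ‖v‖ * δ₂ := mul_le_mul_of_nonneg_left hy2 (norm_nonneg v)
    have hm2 : ‖v‖ * δ₂ ≤ e / 2 := by
      have hpos : (0:ℝ) < ‖v‖ + 1 := by positivity
      calc ‖v‖ * δ₂ ≤ (‖v‖ + 1) * δ₂ :=
            mul_le_mul_of_nonneg_right (by linarith) hδ₂0.le
        _ = e / 2 := by rw [hδ₂def]; field_simp
    linarith
  have hsplit : ⟪v, z - xbar⟫ = ⟪v, z - y⟫ + ⟪v, y - xbar⟫ := by
    rw [← inner_add_right]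
    congr 1
    abel
  have h0 := hv z
  rw [hsplit] at h0
  have habs2 : -(e / 2) ≤ ⟪v, y - xbar⟫ := by
    have := (abs_le.mp (hiv.trans hyv)).1
    linarith
  have habs1 := abs_le.mp hfy.le
  linarith [habs1.1, habs1.2]

lemma seq_tendsto_minNorm [ProperSpace E] (hc : Continuous f) {xbar g : E}
    (hconv : Convex ℝ (epsSubdiff f xbar 0)) (hgS : g ∈ epsSubdiff f xbar 0)
    (hgm : ∀ u ∈ epsSubdiff f xbar 0, ‖g‖ ≤ ‖u‖)
    {es : ℕ → ℝ} {ws : ℕ → E} (he : Tendsto es atTop (𝓝 0))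
    (hw : ∀ k, ws k ∈ epsSubdiff f xbar (es k)) (hwn : ∀ k, ‖ws k‖ ≤ ‖g‖) :
    Tendsto ws atTop (𝓝 g) := by
  apply Filter.tendsto_of_subseq_tendsto
  intro ns hns
  obtain ⟨a, _, φ, hφ, hconv2⟩ := tendsto_subseq_of_bounded
    (Metric.isBounded_closedBall (x := (0:E)) (r := ‖g‖))
    (x := fun k => ws (ns k))
    (fun k => by rw [Metric.mem_closedBall, dist_zero_right]; exact hwn (ns k))
  refine ⟨φ, ?_⟩
  have hlim : Tendsto (fun j => ws (ns (φ j))) atTop (𝓝 a) := hconv2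
  have he2 : Tendsto (fun j => es (ns (φ j))) atTop (𝓝 0) :=
    he.comp (hns.comp hφ.tendsto_atTop)
  have haS : a ∈ epsSubdiff f xbar 0 :=
    epsSubdiff_limit hc he2 tendsto_const_nhds hlim (fun j => hw _)
  have han : ‖a‖ ≤ ‖g‖ :=
    le_of_tendsto hlim.norm (Eventually.of_forall fun j => hwn _)
  have hag : a = g := minNorm_unique hconv hgS haS hgm han
  rwa [hag] at hlim

end Aux


/-- for a convex function `f : ℝⁿ → ℝ`, the map sending `(x, ε)` to
the (unique) minimal-norm element of the `ε`-subdifferential `∂_ε f(x)` is a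
descent-oriented subdifferential for `f`. -/
theorem epsSubdiff_minNorm_descentOriented {n : ℕ}
    (f : EuclideanSpace ℝ (Fin n) → ℝ) (hf : ConvexOn ℝ Set.univ f) :
    (∀ (x : EuclideanSpace ℝ (Fin n)) (ε : ℝ), 0 < ε →
      ∃! v : EuclideanSpace ℝ (Fin n), v ∈ minNormSet (epsSubdiff f x ε)) ∧
    IsDescentOrientedSubdiff f (fun x ε => minNormSet (epsSubdiff f x ε)) := by
  have hc : Continuous f := convexOn_univ_continuous hf
  have hEU : ∀ (x : EuclideanSpace ℝ (Fin n)) (ε : ℝ), 0 ≤ ε →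
      ∃! v, v ∈ minNormSet (epsSubdiff f x ε) := by
    intro x ε hε
    obtain ⟨M, hM⟩ := epsSubdiff_norm_bound hc x hε one_pos
    exact minNorm_existsUnique (epsSubdiff_nonempty hf x hε) (isClosed_epsSubdiff x ε)
      (convex_epsSubdiff x ε) (fun v hv => hM x (by simp) v hv)
  refine ⟨fun x ε hε => hEU x ε hε.le, ?_, ?_, ?_, ?_⟩
  · intro ε hε x
    exact isClosed_minNormSet (isClosed_epsSubdiff x ε)
  · intro ε hε x
    obtain ⟨M, hM⟩ := epsSubdiff_norm_bound hc x hε.le one_pos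
    exact ⟨1, one_pos, M, fun y hy v hv => hM y hy v hv.1⟩
  · intro xbar u hu
    obtain ⟨eps, xs, vs, hpos, heps, hxs, hmem, hvs⟩ := hu
    rw [clarkeSubdiff_eq hf xbar]
    exact epsSubdiff_limit hc heps hxs hvs (fun k => (hmem k).1)
  · intro xbar
    obtain ⟨g, hg, _⟩ := hEU xbar 0 le_rfl
    refine ⟨g, ⟨?_, ?_⟩, ?_, ?_⟩
    · rw [clarkeSubdiff_eq hf xbar]
      exact hg.1
    · intro v hv
      rw [clarkeSubdiff_eq hf xbar] at hv
      exact hg.2 v hv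
    · -- outer limit
      intro u hu
      obtain ⟨eps, us, hpos, heps, hmem, hus⟩ := hu
      have hk : ∀ k, us k ∈ epsSubdiff f xbar (eps k) ∧ ‖us k‖ ≤ ‖g‖ := by
        intro k
        obtain ⟨xs, vs, hxs, hvmem, hvlim⟩ := hmem k
        constructor
        · exact epsSubdiff_limit hc tendsto_const_nhds hxs hvlim (fun j => (hvmem j).1)
        · obtain ⟨δ, hδ0, hδ⟩ := mem_epsSubdiff_near hc hg.1 (hpos k)
          have hev : ∀ᶠ j in atTop, ‖vs j‖ ≤ ‖g‖ := by
            have hball : ∀ᶠ j in atTop, xs j ∈ Metric.ball xbar δ :=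
              hxs (Metric.ball_mem_nhds xbar hδ0)
            filter_upwards [hball] with j hj
            have hgj : g ∈ epsSubdiff f (xs j) (eps k) := by
              apply hδ
              rw [← dist_eq_norm]
              exact hj
            exact (hvmem j).2 g hgj
          exact le_of_tendsto hvlim.norm hev
      have huS : u ∈ epsSubdiff f xbar 0 :=
        epsSubdiff_limit hc heps tendsto_const_nhds hus (fun k => (hk k).1)
      have hun : ‖u‖ ≤ ‖g‖ :=
        le_of_tendsto hus.norm (Eventually.of_forall fun k => (hk k).2)
      exact minNorm_unique (convex_epsSubdiff xbar 0) hg.1 huS hg.2 hun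
    · -- inner limit
      intro u hu
      rw [Set.mem_singleton_iff] at hu
      subst hu
      intro eps hpos heps
      have hch : ∀ k : ℕ, ∃ w, w ∈ minNormSet (epsSubdiff f xbar (eps k)) :=
        fun k => (hEU xbar (eps k) (hpos k).le).exists
      choose w hw using hch
      refine ⟨w, Eventually.of_forall (fun k => ?_), ?_⟩
      · exact ⟨fun _ => xbar, fun _ => w k, tendsto_const_nhds, fun _ => hw k,
          tendsto_const_nhds⟩
      · refine seq_tendsto_minNorm hc (convex_epsSubdiff xbar 0) hg.1 hg.2 heps
          (fun k => (hw k).1) (fun k => ?_)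
        exact (hw k).2 u (epsSubdiff_mono xbar (hpos k).le hg.1)
end
end

section
/- Let f: ℝⁿ → ℝ be ρ-weakly convex (i.e., f + (ρ/2)‖·‖² is convex) and bounded from below. Then for all ε ∈ (0, ρ⁻¹) the proximal mapping P_ε f is single-valued and continuous and the Moreau envelope e_ε f is continuously differentiable with ∇e_ε f(x) = (x − P_ε f(x))/ε. Moreover, for any fixed ε̄ ∈ (0, ρ⁻¹), the single-valued map G: ℝⁿ × (0,∞) → ℝⁿ defined by G(x, ε) = ∇e_ε f(x) when ε ∈ (0, ε̄] and G(x, ε) = ∇e_{ε̄} f(x) when ε > ε̄ is a descent-oriented subdifferential for f. -/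
/-!
With `F = f + ρ/2 ‖·‖²` convex, minimality of `p ∈ P_ε f(x)` along the segment from `p` to `w`
gives the weak subgradient inequality `f w ≥ f p + ⟪(x - p)/ε, w - p⟫ - ρ/2 ‖w - p‖²`. Adding two
such inequalities shows that weak subgradients are `ρ`-hypomonotone; for `ρε < 1` this makes
`P_ε f` single-valued and Lipschitz. The envelope then has the quadratic upper model
`e(y) ≤ e(x) + ⟪(x - P x)/ε, y - x⟫ + ‖y - x‖²/(2ε)` with a continuous slope, so it is
differentiable with that slope as gradient.

For weakly convex `f` the Clarke subdifferential is exactly the set of weak subgradients, a closed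
convex set. Weak subgradients pass to limits, which gives (G1); since `f` is locally Lipschitz,
`∇e_ε f(x̄)` stays bounded as `ε ↓ 0`, so this set is nonempty. Hypomonotonicity against the
minimal-norm subgradient `g` bounds `(1 - ρε) ‖∇e_ε f(x̄)‖ ≤ ‖g‖`, so every cluster point as
`ε ↓ 0` is a subgradient of norm at most `‖g‖`, that is `g` itself (G2).
-/

open Filter Topology Set
open scoped RealInnerProductSpace NNReal

noncomputable section

variable {E : Type*} [NormedAddCommGroup E] [InnerProductSpace ℝ E]

/-- The Moreau envelope `e_ε f`. -/
def moreauEnv (f : E → ℝ) (ε : ℝ) (x : E) : ℝ :=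
  ⨅ z : E, (f z + ‖z - x‖ ^ 2 / (2 * ε))

/-- The proximal mapping `P_ε f` (as a set of minimizers). -/
def proxSet (f : E → ℝ) (ε : ℝ) (x : E) : Set E :=
  {z | ∀ w : E, f z + ‖z - x‖ ^ 2 / (2 * ε) ≤ f w + ‖w - x‖ ^ 2 / (2 * ε)}

def WeaklyConvex (ρ : ℝ) (f : E → ℝ) : Prop :=
  ConvexOn ℝ univ fun x => f x + ρ / 2 * ‖x‖ ^ 2

def IsWeakSubgradient (f : E → ℝ) (ρ : ℝ) (x s : E) : Prop :=
  ∀ w, f x + ⟪s, w - x⟫ - ρ / 2 * ‖w - x‖ ^ 2 ≤ f w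

/-- An arbitrary point when `proxSet f ε x` is empty. -/
def proxPt (f : E → ℝ) (ε : ℝ) (x : E) : E :=
  Classical.epsilon (· ∈ proxSet f ε x)

def moreauGrad (f : E → ℝ) (ε : ℝ) (x : E) : E :=
  (1 / ε) • (x - proxPt f ε x)

lemma le_of_forall_le_add_mul {a b c : ℝ} (h : ∀ t ∈ Ioc (0 : ℝ) 1, a ≤ b + t * c) : a ≤ b := by
  have hlim : Tendsto (fun t => b + t * c) (𝓝[>] 0) (𝓝 (b + 0 * c)) :=
    (tendsto_const_nhds.add (tendsto_id.mul_const c)).mono_left nhdsWithin_le_nhds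
  simpa using ge_of_tendsto hlim (eventually_of_mem (Ioc_mem_nhdsGT one_pos) h)

lemma nhds_prod_nhdsGT_le {X : Type*} [TopologicalSpace X] (x : X) :
    (𝓝 x) ×ˢ (𝓝[>] (0 : ℝ)) ≤ 𝓝 (x, 0) := by
  rw [nhds_prod_eq]
  exact prod_mono le_rfl nhdsWithin_le_nhds

namespace WeaklyConvex

variable {f : E → ℝ} {ρ : ℝ}

lemma apply_add_smul_sub_le (hf : WeaklyConvex ρ f) (a b : E) {t : ℝ} (ht0 : 0 ≤ t)
    (ht1 : t ≤ 1) :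
    f (a + t • (b - a)) ≤ f a + t * (f b - f a) + ρ / 2 * (t * (1 - t)) * ‖b - a‖ ^ 2 := by
  have h := hf.2 (mem_univ a) (mem_univ b) (sub_nonneg.2 ht1) ht0 (by ring)
  have hcomb : (1 - t) • a + t • b = a + t • (b - a) := by module
  have hb : ‖b‖ ^ 2 = ‖a‖ ^ 2 + 2 * ⟪a, b - a⟫ + ‖b - a‖ ^ 2 := by
    rw [← norm_add_sq_real, add_sub_cancel]
  have hz : ‖a + t • (b - a)‖ ^ 2 = ‖a‖ ^ 2 + 2 * t * ⟪a, b - a⟫ + t ^ 2 * ‖b - a‖ ^ 2 := by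
    rw [norm_add_sq_real, real_inner_smul_right, norm_smul, mul_pow, Real.norm_eq_abs, sq_abs]
    ring
  simp only [smul_eq_mul, hcomb, hb, hz] at h
  linear_combination h

lemma diffQuot_le (hf : WeaklyConvex ρ f) (y d : E) {t : ℝ} (ht0 : 0 < t) (ht1 : t ≤ 1) :
    (f (y + t • d) - f y) / t ≤ f (y + d) - f y + ρ / 2 * (1 - t) * ‖d‖ ^ 2 := by
  have h := hf.apply_add_smul_sub_le y (y + d) ht0.le ht1
  rw [add_sub_cancel_left] at h
  rw [div_le_iff₀ ht0]
  linear_combination h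

lemma le_diffQuot (hf : WeaklyConvex ρ f) (y d : E) {t : ℝ} (ht0 : 0 < t) (ht1 : t ≤ 1) :
    f (y + t • d) - f (y + t • d - d) - ρ / 2 * (1 - t) * ‖d‖ ^ 2 ≤ (f (y + t • d) - f y) / t := by
  have h := hf.diffQuot_le (y + t • d) (-d) ht0 ht1
  rw [smul_neg, add_neg_cancel_right, norm_neg, ← sub_eq_add_neg, ← neg_sub (f (y + t • d)),
    neg_div] at h
  linarith

lemma isWeakSubgradient_of_mem_proxSet (hf : WeaklyConvex ρ f) {ε : ℝ} {x p : E}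
    (hp : p ∈ proxSet f ε x) : IsWeakSubgradient f ρ p ((1 / ε) • (x - p)) := by
  intro w
  refine le_of_forall_le_add_mul (c := (1 / (2 * ε) - ρ / 2) * ‖w - p‖ ^ 2) fun t ⟨ht0, ht1⟩ => ?_
  have hmin := hp (p + t • (w - p))
  have hcvx := hf.apply_add_smul_sub_le p w ht0.le ht1
  have hz : ‖p + t • (w - p) - x‖ ^ 2 =
      ‖p - x‖ ^ 2 - 2 * t * ⟪x - p, w - p⟫ + t ^ 2 * ‖w - p‖ ^ 2 := by
    rw [add_sub_right_comm, norm_add_sq_real, real_inner_smul_right, norm_smul, mul_pow,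
      Real.norm_eq_abs, sq_abs, ← neg_sub x p, inner_neg_left]
    ring
  rw [hz] at hmin
  have hslope : 0 ≤ t * (f w - (f p + 1 / ε * ⟪x - p, w - p⟫ - ρ / 2 * ‖w - p‖ ^ 2)
      + t * ((1 / (2 * ε) - ρ / 2) * ‖w - p‖ ^ 2)) := by
    linear_combination hmin + hcvx
  rw [real_inner_smul_left]
  linarith [nonneg_of_mul_nonneg_right hslope ht0]

variable [FiniteDimensional ℝ E]

protected lemma locallyLipschitz (hf : WeaklyConvex ρ f) : LocallyLipschitz f := by
  have hq : LocallyLipschitz fun x : E => ρ / 2 * ‖x‖ ^ 2 :=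
    (contDiff_const.mul (contDiff_norm_sq ℝ)).locallyLipschitz
  simpa using ConvexOn.locallyLipschitz hf |>.sub hq

protected lemma continuous (hf : WeaklyConvex ρ f) : Continuous f :=
  hf.locallyLipschitz.continuous

end WeaklyConvex

section WeakSubgradient

variable {f : E → ℝ} {ρ : ℝ}

/-- `ρ`-hypomonotonicity of weak subgradients, read as a Lipschitz bound for the resolvent
`p + ε • s ↦ p`. -/
lemma IsWeakSubgradient.mul_norm_sub_le {p q s t : E} {ε : ℝ} (hs : IsWeakSubgradient f ρ p s)
    (ht : IsWeakSubgradient f ρ q t) (hε : 0 ≤ ε) :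
    (1 - ρ * ε) * ‖p - q‖ ≤ ‖(p + ε • s) - (q + ε • t)‖ := by
  have hmono : -(ρ * ‖p - q‖ ^ 2) ≤ ⟪s - t, p - q⟫ := by
    have h1 := hs q
    have h2 := ht p
    rw [← neg_sub p q, inner_neg_right, norm_neg] at h1
    rw [inner_sub_left]
    linarith
  have hinner : (1 - ρ * ε) * ‖p - q‖ ^ 2 ≤ ⟪(p + ε • s) - (q + ε • t), p - q⟫ := by
    rw [show (p + ε • s) - (q + ε • t) = (p - q) + ε • (s - t) by module, inner_add_left,
      real_inner_smul_left, real_inner_self_eq_norm_sq]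
    nlinarith
  rcases (norm_nonneg (p - q)).eq_or_lt with h0 | h0
  · rw [← h0, mul_zero]
    exact norm_nonneg _
  · refine le_of_mul_le_mul_right ?_ h0
    calc (1 - ρ * ε) * ‖p - q‖ * ‖p - q‖ = (1 - ρ * ε) * ‖p - q‖ ^ 2 := by ring
      _ ≤ _ := hinner.trans (real_inner_le_norm _ _)

lemma isClosed_setOf_isWeakSubgradient (hf : Continuous f) :
    IsClosed {q : E × E | IsWeakSubgradient f ρ q.1 q.2} := by
  simp only [IsWeakSubgradient, ofPred_forall]
  exact isClosed_iInter fun w => isClosed_le (by fun_prop) continuous_const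

lemma convex_setOf_isWeakSubgradient (x : E) : Convex ℝ {s | IsWeakSubgradient f ρ x s} := by
  intro s hs t ht a b ha hb hab w
  have h1 := hs w
  have h2 := ht w
  rw [inner_add_left, real_inner_smul_left, real_inner_smul_left]
  linear_combination a * h1 + b * h2 + (f w + ρ / 2 * ‖w - x‖ ^ 2 - f x) * hab

end WeakSubgradient

section Clarke

variable {f : E → ℝ} {ρ : ℝ}

lemma WeaklyConvex.isBoundedUnder_le_diffQuot (hf : WeaklyConvex ρ f) (hfc : Continuous f)
    (x d : E) :
    IsBoundedUnder (· ≤ ·) ((𝓝 x) ×ˢ (𝓝[>] (0 : ℝ)))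
      (fun q : E × ℝ => (f (q.1 + q.2 • d) - f q.1) / q.2) :=
  (((Continuous.tendsto (by fun_prop) (x, 0)).mono_left (nhds_prod_nhdsGT_le x)).isBoundedUnder_le
    |>.mono_le ((Eventually.prod_inr (Ioc_mem_nhdsGT one_pos) _).mono
      fun q hq => hf.diffQuot_le q.1 d hq.1 hq.2))

lemma WeaklyConvex.isCoboundedUnder_le_diffQuot (hf : WeaklyConvex ρ f) (hfc : Continuous f)
    (x d : E) :
    IsCoboundedUnder (· ≤ ·) ((𝓝 x) ×ˢ (𝓝[>] (0 : ℝ)))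
      (fun q : E × ℝ => (f (q.1 + q.2 • d) - f q.1) / q.2) :=
  (((Continuous.tendsto (by fun_prop) (x, 0)).mono_left (nhds_prod_nhdsGT_le x)).isBoundedUnder_ge
    |>.mono_ge ((Eventually.prod_inr (Ioc_mem_nhdsGT one_pos) _).mono
      fun q hq => hf.le_diffQuot q.1 d hq.1 hq.2)).isCoboundedUnder_le

lemma WeaklyConvex.clarkeDeriv_le (hf : WeaklyConvex ρ f) (hfc : Continuous f) (x d : E) :
    clarkeDeriv f x d ≤ f (x + d) - f x + ρ / 2 * ‖d‖ ^ 2 := by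
  have hc : Continuous fun q : E × ℝ => f (q.1 + d) - f q.1 + ρ / 2 * (1 - q.2) * ‖d‖ ^ 2 := by
    fun_prop
  have hlim : Tendsto (fun q : E × ℝ => f (q.1 + d) - f q.1 + ρ / 2 * (1 - q.2) * ‖d‖ ^ 2)
      ((𝓝 x) ×ˢ (𝓝[>] (0 : ℝ))) (𝓝 (f (x + d) - f x + ρ / 2 * ‖d‖ ^ 2)) := by
    simpa using (hc.tendsto (x, 0)).mono_left (nhds_prod_nhdsGT_le x)
  rw [← hlim.limsup_eq]
  exact limsup_le_limsup ((Eventually.prod_inr (Ioc_mem_nhdsGT one_pos) _).mono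
    fun q hq => hf.diffQuot_le q.1 d hq.1 hq.2)
    (hf.isCoboundedUnder_le_diffQuot hfc x d) hlim.isBoundedUnder_le

lemma IsWeakSubgradient.inner_le_clarkeDeriv {x u : E} (hf : WeaklyConvex ρ f)
    (hfc : Continuous f) (hu : IsWeakSubgradient f ρ x u) (d : E) :
    ⟪u, d⟫ ≤ clarkeDeriv f x d := by
  refine le_limsup_of_le (hf.isBoundedUnder_le_diffQuot hfc x d) fun b hb => ?_
  have hlow : ∀ t > (0 : ℝ), ⟪u, d⟫ - ρ / 2 * t * ‖d‖ ^ 2 ≤ (f (x + t • d) - f x) / t := by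
    intro t ht
    have h := hu (x + t • d)
    rw [add_sub_cancel_left, real_inner_smul_right, norm_smul, mul_pow, Real.norm_eq_abs,
      sq_abs] at h
    rw [le_div_iff₀ ht]
    linarith
  have hb' : ∀ᶠ t in 𝓝[>] (0 : ℝ), ⟪u, d⟫ - ρ / 2 * t * ‖d‖ ^ 2 ≤ b :=
    ((tendsto_const_nhds.prodMk tendsto_id).eventually hb).and self_mem_nhdsWithin |>.mono
      fun t ht => (hlow t ht.2).trans ht.1
  have hc : Continuous fun t : ℝ => ⟪u, d⟫ - ρ / 2 * t * ‖d‖ ^ 2 := by fun_prop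
  exact le_of_tendsto (by simpa using (hc.tendsto 0).mono_left nhdsWithin_le_nhds) hb'

lemma WeaklyConvex.clarkeSubdiff_eq (hf : WeaklyConvex ρ f) (hfc : Continuous f) (x : E) :
    clarkeSubdiff f x = {u | IsWeakSubgradient f ρ x u} := by
  refine Set.ext fun u => ⟨fun hu w => ?_, fun hu d => hu.inner_le_clarkeDeriv hf hfc d⟩
  have h := (hu (w - x)).trans (hf.clarkeDeriv_le hfc x (w - x))
  rw [add_sub_cancel] at h
  linarith

end Clarke

section Prox

variable {X : Type*} [NormedAddCommGroup X] {f : X → ℝ} {ε : ℝ}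

lemma proxPt_mem {x : X} (h : (proxSet f ε x).Nonempty) : proxPt f ε x ∈ proxSet f ε x :=
  Classical.epsilon_spec h

lemma proxSet_nonempty [ProperSpace X] (hf : Continuous f) (hbdd : BddBelow (range f))
    (hε : 0 < ε) (x : X) : (proxSet f ε x).Nonempty := by
  obtain ⟨B, hB⟩ := hbdd
  have hcoer : Tendsto (fun z => f z + ‖z - x‖ ^ 2 / (2 * ε)) (cocompact X) atTop := by
    refine tendsto_atTop_add_left_of_le _ B (fun z => hB (mem_range_self z)) ?_
    simpa only [dist_eq_norm, Function.comp_def] using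
      ((tendsto_pow_atTop two_ne_zero).comp (tendsto_dist_right_cocompact_atTop x)).atTop_div_const
        (by positivity)
  exact (by fun_prop : Continuous fun z => f z + ‖z - x‖ ^ 2 / (2 * ε)).exists_forall_le hcoer

lemma norm_sub_sq_le_of_mem_proxSet (hε : 0 < ε) {x p : X} (hp : p ∈ proxSet f ε x) {B : ℝ}
    (hB : ∀ z, B ≤ f z) : ‖p - x‖ ^ 2 ≤ 2 * ε * (f x - B) := by
  have h := hp x
  rw [sub_self, norm_zero, zero_pow two_ne_zero, zero_div, add_zero] at h
  have := hB p
  rw [← le_sub_iff_add_le', div_le_iff₀ (by positivity)] at h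
  nlinarith

lemma tendsto_of_mem_proxSet {x : X} (hf : ContinuousAt f x) (hbdd : BddBelow (range f))
    {eps : ℕ → ℝ} {xs ps : ℕ → X} (heps0 : ∀ k, 0 < eps k) (heps : Tendsto eps atTop (𝓝 0))
    (hxs : Tendsto xs atTop (𝓝 x)) (hps : ∀ k, ps k ∈ proxSet f (eps k) (xs k)) :
    Tendsto ps atTop (𝓝 x) := by
  obtain ⟨B, hB⟩ := hbdd
  have hsq : Tendsto (fun k => ‖ps k - xs k‖ ^ 2) atTop (𝓝 0) := by
    have h : Tendsto (fun k => 2 * eps k * (f (xs k) - B)) atTop (𝓝 (2 * 0 * (f x - B))) :=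
      (heps.const_mul 2).mul ((hf.tendsto.comp hxs).sub_const B)
    rw [mul_zero, zero_mul] at h
    exact squeeze_zero (fun k => by positivity)
      (fun k => norm_sub_sq_le_of_mem_proxSet (heps0 k) (hps k) fun z => hB (mem_range_self z)) h
  have hnorm : Tendsto (fun k => ‖ps k - xs k‖) atTop (𝓝 0) := by
    simpa [Real.sqrt_sq (norm_nonneg _)] using hsq.sqrt
  simpa using hxs.add (tendsto_zero_iff_norm_tendsto_zero.2 hnorm)

lemma norm_smul_sub_le_of_mem_proxSet [NormedSpace ℝ X] (hε : 0 < ε) {x p : X}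
    (hp : p ∈ proxSet f ε x) {K : ℝ} (hK0 : 0 ≤ K) (hK : f x - f p ≤ K * ‖x - p‖) :
    ‖(1 / ε) • (x - p)‖ ≤ 2 * K := by
  have h := hp x
  rw [sub_self, norm_zero, zero_pow two_ne_zero, zero_div, add_zero, norm_sub_rev] at h
  have hsq : ‖x - p‖ ^ 2 ≤ 2 * ε * (K * ‖x - p‖) := by
    rw [← div_le_iff₀' (by positivity)]
    linarith
  rw [norm_smul, Real.norm_of_nonneg (by positivity), one_div, inv_mul_le_iff₀ hε]
  nlinarith [mul_nonneg hε.le hK0, norm_nonneg (x - p)]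

end Prox

lemma WeaklyConvex.mul_norm_sub_le_of_mem_proxSet {f : E → ℝ} {ρ ε : ℝ} (hf : WeaklyConvex ρ f)
    (hε : 0 < ε) {x y p q : E} (hp : p ∈ proxSet f ε x) (hq : q ∈ proxSet f ε y) :
    (1 - ρ * ε) * ‖p - q‖ ≤ ‖x - y‖ := by
  have h := (hf.isWeakSubgradient_of_mem_proxSet hp).mul_norm_sub_le
    (hf.isWeakSubgradient_of_mem_proxSet hq) hε.le
  rwa [smul_smul, mul_one_div_cancel hε.ne', one_smul, smul_smul, mul_one_div_cancel hε.ne',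
    one_smul, add_sub_cancel, add_sub_cancel] at h

section Moreau

variable {f : E → ℝ} {ε : ℝ}

lemma moreauEnv_le_add_inner {x y p q : E} (hp : p ∈ proxSet f ε x) (hq : q ∈ proxSet f ε y) :
    moreauEnv f ε y ≤
      moreauEnv f ε x + ⟪(1 / ε) • (x - p), y - x⟫ + 1 / (2 * ε) * ‖y - x‖ ^ 2 := by
  have hx : moreauEnv f ε x = f p + ‖p - x‖ ^ 2 / (2 * ε) :=
    le_antisymm (ciInf_le ⟨_, forall_mem_range.2 hp⟩ p) (le_ciInf hp)
  have hy : moreauEnv f ε y ≤ f p + ‖p - y‖ ^ 2 / (2 * ε) := ciInf_le ⟨_, forall_mem_range.2 hq⟩ p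
  have hexp : ‖p - y‖ ^ 2 = ‖p - x‖ ^ 2 + 2 * ⟪x - p, y - x⟫ + ‖y - x‖ ^ 2 := by
    rw [show p - y = -((x - p) + (y - x)) by abel, norm_neg, norm_add_sq_real, norm_sub_rev p x]
  calc moreauEnv f ε y ≤ f p + ‖p - y‖ ^ 2 / (2 * ε) := hy
    _ = _ := by rw [hx, hexp, real_inner_smul_left]; ring

/-- Exchanging `x` and `y` in the upper model gives a lower model whose error is
`⟪v y - v x, y - x⟫ = o(‖y - x‖)`. -/
lemma hasGradientAt_of_le_inner_add_sq [CompleteSpace E] {g : E → ℝ} {v : E → E} {c : ℝ} {x : E}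
    (hv : ContinuousAt v x) (h : ∀ x y, g y ≤ g x + ⟪v x, y - x⟫ + c * ‖y - x‖ ^ 2) :
    HasGradientAt g (v x) x := by
  rw [hasGradientAt_iff_isLittleO]
  have hbound : ∀ y, ‖g y - g x - ⟪v x, y - x⟫‖ ≤ (‖v y - v x‖ + |c| * ‖y - x‖) * ‖y - x‖ := by
    intro y
    have hup := h x y
    have hlow := h y x
    rw [← neg_sub y x, inner_neg_right, norm_neg] at hlow
    have hcs := abs_real_inner_le_norm (v y - v x) (y - x)
    rw [inner_sub_left, abs_le] at hcs
    have hc : c * ‖y - x‖ ^ 2 ≤ |c| * ‖y - x‖ ^ 2 :=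
      mul_le_mul_of_nonneg_right (le_abs_self c) (sq_nonneg _)
    rw [Real.norm_eq_abs, abs_le]
    constructor <;> nlinarith
  have hsmall : Tendsto (fun y => ‖v y - v x‖ + |c| * ‖y - x‖) (𝓝 x) (𝓝 0) := by
    have h1 : Tendsto (fun y => v y - v x) (𝓝 x) (𝓝 0) := by
      simpa using hv.tendsto.sub_const (v x)
    have h2 : Tendsto (fun y => y - x) (𝓝 x) (𝓝 0) := by
      simpa using (tendsto_id (x := 𝓝 x)).sub_const x
    simpa using h1.norm.add (h2.norm.const_mul |c|)
  refine (Asymptotics.IsBigO.of_bound 1 (Eventually.of_forall fun y => ?_)).trans_isLittleO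
    (((Asymptotics.isLittleO_one_iff ℝ).2 hsmall).mul_isBigO
      (Asymptotics.isBigO_refl (fun y => ‖y - x‖) _) |>.trans_isBigO ?_)
  · rw [one_mul, norm_mul, norm_norm, Real.norm_of_nonneg
      (add_nonneg (norm_nonneg (v y - v x)) (mul_nonneg (abs_nonneg c) (norm_nonneg (y - x))))]
    exact hbound y
  · simpa using (Asymptotics.isBigO_refl (fun y => y - x) (𝓝 x)).norm_left

lemma hasGradientAt_moreauEnv [CompleteSpace E] {P : E → E} (hP : ∀ x, P x ∈ proxSet f ε x)
    (hPc : Continuous P) (x : E) : HasGradientAt (moreauEnv f ε) ((1 / ε) • (x - P x)) x :=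
  hasGradientAt_of_le_inner_add_sq ((continuous_id.sub hPc).const_smul (1 / ε)).continuousAt
    fun x y => moreauEnv_le_add_inner (hP x) (hP y)

end Moreau

section SetValued

variable {X : Type*} [NormedAddCommGroup X]

lemma setMapLimsup_singleton {φ : X → X} {x : X} (hφ : ContinuousAt φ x) :
    SetMapLimsup (fun y => {φ y}) x = {φ x} := by
  ext u
  constructor
  · rintro ⟨xs, vs, hxs, hvs, hu⟩
    exact tendsto_nhds_unique hu ((hφ.tendsto.comp hxs).congr fun k => (hvs k).symm)
  · rintro rfl
    exact ⟨fun _ => x, fun _ => φ x, tendsto_const_nhds, fun _ => rfl, tendsto_const_nhds⟩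

lemma pkTendsto_singleton {A : ℝ → Set X} {a : ℝ → X} {g : X} (hA : ∀ ε, 0 < ε → A ε = {a ε})
    (ha : ∀ eps : ℕ → ℝ, (∀ k, 0 < eps k) → Tendsto eps atTop (𝓝 0) →
      Tendsto (fun k => a (eps k)) atTop (𝓝 g)) :
    PKTendsto A {g} := by
  constructor
  · rintro u ⟨eps, vs, heps0, heps, hvs, hu⟩
    refine tendsto_nhds_unique hu ((ha eps heps0 heps).congr fun k => ?_)
    have := hvs k
    rw [hA _ (heps0 k)] at this
    exact this.symm
  · rintro u rfl eps heps0 heps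
    exact ⟨fun k => a (eps k), Eventually.of_forall fun k => by simp [hA _ (heps0 k)],
      ha eps heps0 heps⟩

lemma exists_isMinNormElt [ProperSpace X] {S : Set X} (hS : IsClosed S) (hne : S.Nonempty) :
    ∃ g, IsMinNormElt S g := by
  obtain ⟨g, hg, hdist⟩ := hS.exists_infDist_eq_dist hne 0
  refine ⟨g, hg, fun v hv => ?_⟩
  simpa [hdist] using Metric.infDist_le_dist_of_mem hv (x := 0)

lemma IsMinNormElt.eq_of_norm_le {S : Set E} {g u : E} (hS : Convex ℝ S)
    (hg : IsMinNormElt S g) (hu : u ∈ S) (hug : ‖u‖ ≤ ‖g‖) : u = g := by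
  have hm : (1 / 2 : ℝ) • u + (1 / 2 : ℝ) • g ∈ S :=
    hS hu hg.1 (by norm_num) (by norm_num) (by norm_num)
  have hmid := hg.2 _ hm
  rw [← smul_add, norm_smul, Real.norm_of_nonneg (by norm_num)] at hmid
  have hpar := parallelogram_law_with_norm ℝ u g
  rw [← sub_eq_zero, ← norm_eq_zero]
  nlinarith [norm_nonneg (u - g), norm_nonneg u, norm_nonneg g]

end SetValued

namespace WeaklyConvex

variable [FiniteDimensional ℝ E] {f : E → ℝ} {ρ ε : ℝ}

lemma proxPt_mem (hf : WeaklyConvex ρ f) (hbdd : BddBelow (range f)) (hε : 0 < ε) (x : E) :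
    proxPt f ε x ∈ proxSet f ε x :=
  _root_.proxPt_mem (proxSet_nonempty hf.continuous hbdd hε x)

lemma proxSet_eq_singleton (hf : WeaklyConvex ρ f) (hbdd : BddBelow (range f)) (hε : 0 < ε)
    (hρε : ρ * ε < 1) (x : E) : proxSet f ε x = {proxPt f ε x} := by
  refine Set.ext fun q =>
    ⟨fun hq => ?_, fun hq => (mem_singleton_iff.1 hq) ▸ hf.proxPt_mem hbdd hε x⟩
  have h := hf.mul_norm_sub_le_of_mem_proxSet hε hq (hf.proxPt_mem hbdd hε x)
  rw [sub_self, norm_zero, ← mul_zero (1 - ρ * ε)] at h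
  exact sub_eq_zero.1 (norm_le_zero_iff.1 (le_of_mul_le_mul_left h (by linarith)))

lemma lipschitzWith_proxPt (hf : WeaklyConvex ρ f) (hbdd : BddBelow (range f)) (hε : 0 < ε)
    (hρε : ρ * ε < 1) : LipschitzWith (Real.toNNReal (1 - ρ * ε)⁻¹) (proxPt f ε) := by
  refine LipschitzWith.of_dist_le_mul fun x y => ?_
  rw [Real.coe_toNNReal _ (by simp only [inv_nonneg]; linarith), dist_eq_norm, dist_eq_norm,
    ← div_eq_inv_mul, le_div_iff₀ (by linarith), mul_comm]
  exact hf.mul_norm_sub_le_of_mem_proxSet hε (hf.proxPt_mem hbdd hε x) (hf.proxPt_mem hbdd hε y)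

lemma continuous_moreauGrad (hf : WeaklyConvex ρ f) (hbdd : BddBelow (range f)) (hε : 0 < ε)
    (hρε : ρ * ε < 1) : Continuous (moreauGrad f ε) :=
  (continuous_id.sub (hf.lipschitzWith_proxPt hbdd hε hρε).continuous).const_smul _

lemma hasGradientAt_moreauEnv (hf : WeaklyConvex ρ f) (hbdd : BddBelow (range f)) (hε : 0 < ε)
    (hρε : ρ * ε < 1) (x : E) : HasGradientAt (moreauEnv f ε) (moreauGrad f ε x) x :=
  _root_.hasGradientAt_moreauEnv (hf.proxPt_mem hbdd hε)
    (hf.lipschitzWith_proxPt hbdd hε hρε).continuous x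

lemma mem_clarkeSubdiff_of_tendsto_moreauGrad (hf : WeaklyConvex ρ f) (hbdd : BddBelow (range f))
    {eps : ℕ → ℝ} {xs : ℕ → E} {x u : E} (heps0 : ∀ k, 0 < eps k)
    (heps : Tendsto eps atTop (𝓝 0)) (hxs : Tendsto xs atTop (𝓝 x))
    (hu : Tendsto (fun k => moreauGrad f (eps k) (xs k)) atTop (𝓝 u)) :
    u ∈ clarkeSubdiff f x := by
  have hprox := fun k => hf.proxPt_mem hbdd (heps0 k) (xs k)
  have hps := tendsto_of_mem_proxSet hf.continuous.continuousAt hbdd heps0 heps hxs hprox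
  rw [hf.clarkeSubdiff_eq hf.continuous]
  exact (isClosed_setOf_isWeakSubgradient hf.continuous).mem_of_tendsto (hps.prodMk_nhds hu)
    (Eventually.of_forall fun k => hf.isWeakSubgradient_of_mem_proxSet (hprox k))

lemma clarkeSubdiff_nonempty (hf : WeaklyConvex ρ f) (hbdd : BddBelow (range f)) (x : E) :
    (clarkeSubdiff f x).Nonempty := by
  set eps : ℕ → ℝ := fun k => 1 / (k + 1)
  have heps0 : ∀ k, 0 < eps k := fun k => Nat.one_div_pos_of_nat
  have heps : Tendsto eps atTop (𝓝 0) := tendsto_one_div_add_atTop_nhds_zero_nat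
  have hprox := fun k => hf.proxPt_mem hbdd (heps0 k) x
  have hps := tendsto_of_mem_proxSet hf.continuous.continuousAt hbdd heps0 heps
    tendsto_const_nhds hprox
  obtain ⟨K, U, hU, hK⟩ := hf.locallyLipschitz x
  have hbound : ∀ᶠ k in atTop, moreauGrad f (eps k) x ∈ Metric.closedBall 0 (2 * K) := by
    filter_upwards [hps hU] with k hk
    rw [mem_closedBall_zero_iff]
    refine norm_smul_sub_le_of_mem_proxSet (heps0 k) (hprox k) K.2 ?_
    have := hK.dist_le_mul x (mem_of_mem_nhds hU) _ hk
    rw [dist_eq_norm, dist_eq_norm, Real.norm_eq_abs] at this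
    exact (le_abs_self _).trans this
  obtain ⟨u, -, φ, hφ, hu⟩ :=
    tendsto_subseq_of_frequently_bounded Metric.isBounded_closedBall hbound.frequently
  exact ⟨u, hf.mem_clarkeSubdiff_of_tendsto_moreauGrad hbdd (fun k => heps0 (φ k))
    (heps.comp hφ.tendsto_atTop) tendsto_const_nhds hu⟩

lemma tendsto_moreauGrad_of_isMinNormElt (hf : WeaklyConvex ρ f) (hbdd : BddBelow (range f))
    {x g : E} (hg : IsMinNormElt (clarkeSubdiff f x) g) {eps : ℕ → ℝ} (heps0 : ∀ k, 0 < eps k)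
    (heps : Tendsto eps atTop (𝓝 0)) :
    Tendsto (fun k => moreauGrad f (eps k) x) atTop (𝓝 g) := by
  have hg' : IsWeakSubgradient f ρ x g := by
    simpa only [hf.clarkeSubdiff_eq hf.continuous, mem_ofPred_eq] using hg.1
  have hbound : ∀ k, (1 - ρ * eps k) * ‖moreauGrad f (eps k) x‖ ≤ ‖g‖ := fun k => by
    have hε := heps0 k
    have h := (hf.isWeakSubgradient_of_mem_proxSet (hf.proxPt_mem hbdd hε x)).mul_norm_sub_le
      hg' hε.le
    rw [smul_smul, mul_one_div_cancel hε.ne', one_smul, add_sub_cancel, sub_add_cancel_left,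
      norm_neg, norm_smul, Real.norm_of_nonneg hε.le, norm_sub_rev] at h
    rwa [moreauGrad, norm_smul, Real.norm_of_nonneg (by positivity), mul_left_comm, one_div,
      inv_mul_le_iff₀ hε]
  have hρeps : Tendsto (fun k => 1 - ρ * eps k) atTop (𝓝 1) := by
    simpa using (heps.const_mul ρ).const_sub 1
  have hball : ∀ᶠ k in atTop, moreauGrad f (eps k) x ∈ Metric.closedBall 0 (2 * ‖g‖) := by
    filter_upwards [hρeps.eventually (lt_mem_nhds one_half_lt_one)] with k hk
    rw [mem_closedBall_zero_iff]
    nlinarith [hbound k, norm_nonneg (moreauGrad f (eps k) x)]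
  refine (isCompact_closedBall 0 _).tendsto_nhds_of_unique_mapClusterPt hball fun u _ hu => ?_
  obtain ⟨φ, hφ, hlim⟩ := hu.tendsto_subseq
  have huS : u ∈ clarkeSubdiff f x := hf.mem_clarkeSubdiff_of_tendsto_moreauGrad hbdd
    (fun k => heps0 (φ k)) (heps.comp hφ.tendsto_atTop) tendsto_const_nhds hlim
  have hconv : Convex ℝ (clarkeSubdiff f x) := by
    rw [hf.clarkeSubdiff_eq hf.continuous]
    exact convex_setOf_isWeakSubgradient x
  have hnorm := (hρeps.comp hφ.tendsto_atTop).mul hlim.norm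
  rw [one_mul] at hnorm
  exact hg.eq_of_norm_le hconv huS
    (le_of_tendsto hnorm (Eventually.of_forall fun k => hbound (φ k)))

theorem isDescentOrientedSubdiff_gradient_moreauEnv (hf : WeaklyConvex ρ f)
    (hbdd : BddBelow (range f)) {σ : ℝ → ℝ} (hσ : ∀ ε, 0 < ε → 0 < σ ε ∧ ρ * σ ε < 1)
    (hσ0 : Tendsto σ (𝓝[>] 0) (𝓝 0)) :
    IsDescentOrientedSubdiff f (fun x ε => {gradient (moreauEnv f (σ ε)) x}) := by
  have hgrad : ∀ ε, 0 < ε → gradient (moreauEnv f (σ ε)) = moreauGrad f (σ ε) := fun ε hε =>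
    funext fun x => (hf.hasGradientAt_moreauEnv hbdd (hσ ε hε).1 (hσ ε hε).2 x).gradient
  have hcont : ∀ ε, 0 < ε → Continuous (moreauGrad f (σ ε)) := fun ε hε =>
    hf.continuous_moreauGrad hbdd (hσ ε hε).1 (hσ ε hε).2
  have hseq : ∀ eps : ℕ → ℝ, (∀ k, 0 < eps k) → Tendsto eps atTop (𝓝 0) →
      Tendsto (fun k => σ (eps k)) atTop (𝓝 0) := fun eps heps0 heps =>
    hσ0.comp (tendsto_nhdsWithin_iff.2 ⟨heps, Eventually.of_forall heps0⟩)
  refine ⟨fun _ _ _ => isClosed_singleton, fun ε hε x => ?_, fun x u hu => ?_, fun x => ?_⟩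
  · obtain ⟨δ, hδ, hball⟩ := Metric.continuousAt_iff.1 (hcont ε hε).continuousAt 1 one_pos
    refine ⟨δ, hδ, ‖moreauGrad f (σ ε) x‖ + 1, fun y hy v hv => ?_⟩
    rw [mem_singleton_iff.1 hv, hgrad ε hε]
    have h := hball (by rwa [dist_eq_norm])
    rw [dist_eq_norm] at h
    linarith [norm_le_norm_add_norm_sub' (moreauGrad f (σ ε) y) (moreauGrad f (σ ε) x)]
  · obtain ⟨eps, xs, vs, heps0, heps, hxs, hvs, hu⟩ := hu
    refine hf.mem_clarkeSubdiff_of_tendsto_moreauGrad hbdd (fun k => (hσ _ (heps0 k)).1)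
      (hseq eps heps0 heps) hxs (hu.congr fun k => ?_)
    rw [mem_singleton_iff.1 (hvs k), hgrad _ (heps0 k)]
  · have hclosed : IsClosed (clarkeSubdiff f x) := by
      rw [hf.clarkeSubdiff_eq hf.continuous]
      exact (isClosed_setOf_isWeakSubgradient hf.continuous).preimage (Continuous.prodMk_right x)
    obtain ⟨g, hg⟩ := exists_isMinNormElt hclosed (hf.clarkeSubdiff_nonempty hbdd x)
    refine ⟨g, hg, pkTendsto_singleton (a := fun ε => moreauGrad f (σ ε) x) (fun ε hε => ?_)
      fun eps heps0 heps => hf.tendsto_moreauGrad_of_isMinNormElt hbdd hg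
        (fun k => (hσ _ (heps0 k)).1) (hseq eps heps0 heps)⟩
    rw [hgrad ε hε]
    exact setMapLimsup_singleton (hcont ε hε).continuousAt

end WeaklyConvex

/-- for a `ρ`-weakly convex `f` bounded from below, for every
`ε ∈ (0, ρ⁻¹)` the proximal map is single-valued and continuous and the Moreau
envelope is continuously differentiable with `∇ e_ε f (x) = (x - P_ε f (x)) / ε`;
moreover, for any fixed `ε̄ ∈ (0, ρ⁻¹)`, the map `(x, ε) ↦ ∇ e_{min{ε, ε̄}} f (x)`
is a descent-oriented subdifferential for `f`. -/
theorem moreau_gradient_descentOriented {n : ℕ}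
    (f : EuclideanSpace ℝ (Fin n) → ℝ) (ρ : ℝ) (hρ : 0 < ρ)
    (hwc : ConvexOn ℝ Set.univ (fun x => f x + ρ / 2 * ‖x‖ ^ 2))
    (hbdd : BddBelow (Set.range f)) :
    (∀ ε ∈ Set.Ioo (0 : ℝ) ρ⁻¹,
      ∃ p : EuclideanSpace ℝ (Fin n) → EuclideanSpace ℝ (Fin n),
        Continuous p ∧ (∀ x, proxSet f ε x = {p x}) ∧
        ∀ x, HasGradientAt (moreauEnv f ε) ((1 / ε) • (x - p x)) x) ∧
    ∀ εbar ∈ Set.Ioo (0 : ℝ) ρ⁻¹,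
      IsDescentOrientedSubdiff f
        (fun x ε => {gradient (moreauEnv f (if ε ≤ εbar then ε else εbar)) x}) := by
  have hf : WeaklyConvex ρ f := hwc
  have hρε : ∀ {ε : ℝ}, ε < ρ⁻¹ → ρ * ε < 1 := fun h => by
    simpa [mul_inv_cancel₀ hρ.ne'] using mul_lt_mul_of_pos_left h hρ
  refine ⟨fun ε ⟨hε0, hε1⟩ => ⟨proxPt f ε, (hf.lipschitzWith_proxPt hbdd hε0 (hρε hε1)).continuous,
    hf.proxSet_eq_singleton hbdd hε0 (hρε hε1), hf.hasGradientAt_moreauEnv hbdd hε0 (hρε hε1)⟩,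
    fun εbar ⟨hb0, hb1⟩ => hf.isDescentOrientedSubdiff_gradient_moreauEnv hbdd (fun ε hε => ?_) ?_⟩
  · split_ifs with h
    · exact ⟨hε, hρε (h.trans_lt hb1)⟩
    · exact ⟨hb0, hρε hb1⟩
  · refine (tendsto_id.congr' ?_).mono_left nhdsWithin_le_nhds
    filter_upwards [eventually_le_nhds hb0] with ε hε
    rw [if_pos hε, id]
end
end

section
/- Let f: ℝⁿ → ℝ be bounded from below, let α ∈ (0,1), and let {x_k} and {g_k} be sequences in ℝⁿ satisfying f(x_{k+1}) ≤ f(x_k) − α·‖x_{k+1} − x_k‖·‖g_k‖ for all k. If {x_k} has an accumulation point x̄, then either (a) x_k converges to x̄, or (b) liminf_{k→∞} max{‖x_k − x̄‖, ‖g_k‖} = 0. -/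
/-!
The descent inequality and the lower bound on `f` make `∑ ‖x_{k+1} - x_k‖ ‖g_k‖` finite. If the
liminf is positive, there is `ε > 0` with `‖g_k‖ ≥ ε` whenever `x_k` lies in the `ε`-ball around
`x̄` (for large `k`), so inside that ball the steps `‖x_{k+1} - x_k‖` are bounded by the summable
sequence `‖x_{k+1} - x_k‖ ‖g_k‖ / ε`. An iterate of the convergent subsequence that is late enough
and close enough to `x̄` then traps all later iterates in any prescribed small ball around `x̄`.
-/

open Filter Topology Set

theorem summable_of_le_sub_mul {a u : ℕ → ℝ} {α : ℝ} (hα : 0 < α) (hu : ∀ k, 0 ≤ u k)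
    (ha : BddBelow (range a)) (h : ∀ k, a (k + 1) ≤ a k - α * u k) : Summable u := by
  obtain ⟨B, hB⟩ := ha
  refine summable_of_sum_range_le hu (c := (a 0 - B) / α) fun m => ?_
  have hdecrease : α * ∑ k ∈ Finset.range m, u k ≤ a 0 - a m :=
    calc α * ∑ k ∈ Finset.range m, u k = ∑ k ∈ Finset.range m, α * u k := Finset.mul_sum _ _ _
      _ ≤ ∑ k ∈ Finset.range m, (a k - a (k + 1)) :=
        Finset.sum_le_sum fun k _ => by linarith [h k]
      _ = a 0 - a m := Finset.sum_range_sub' a m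
  rw [le_div_iff₀' hα]
  linarith [hB (mem_range_self m)]

theorem exists_pos_eventually_le_of_liminf_ne_zero {ι : Type*} {l : Filter ι} {w : ι → ℝ}
    (hw : ∀ i, 0 ≤ w i) (h : liminf w l ≠ 0) : ∃ ε > 0, ∀ᶠ i in l, ε ≤ w i := by
  -- `liminf` is an `sSup`, which is `0` when unbounded, so no boundedness is needed here.
  have hnonneg : 0 ≤ liminf w l := by
    rw [liminf_eq]
    exact Real.sSup_nonneg' ⟨0, Eventually.of_forall hw, le_rfl⟩
  obtain ⟨ε, hε, hlt⟩ := exists_between (hnonneg.lt_of_ne' h)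
  exact ⟨ε, hε, (eventually_lt_of_lt_liminf hlt (isBoundedUnder_of ⟨0, hw⟩)).mono fun _ => le_of_lt⟩

theorem Summable.eventually_forall_sum_Ico_lt {v : ℕ → ℝ} (hv : Summable v) {ε : ℝ}
    (hε : 0 < ε) : ∀ᶠ K in atTop, ∀ m, ∑ k ∈ Finset.Ico K m, v k < ε := by
  obtain ⟨K, hK⟩ := Metric.cauchySeq_iff.1 hv.tendsto_sum_tsum_nat.cauchySeq ε hε
  refine eventually_atTop.2 ⟨K, fun M hM m => ?_⟩
  rcases le_total m M with hmM | hMm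
  · simpa [Finset.Ico_eq_empty_of_le hmM] using hε
  · rw [Finset.sum_Ico_eq_sub _ hMm]
    exact (le_abs_self _).trans_lt (hK m (hM.trans hMm) M hM)

section PseudoMetricSpace

variable {X : Type*} [PseudoMetricSpace X] {x : ℕ → X} {a : X} {v : ℕ → ℝ} {r : ℝ}

theorem forall_dist_lt_of_sum_Ico_lt {M : ℕ}
    (hstep : ∀ k ≥ M, dist (x k) a < r → dist (x (k + 1)) (x k) ≤ v k)
    (hsmall : ∀ m, dist (x M) a + ∑ k ∈ Finset.Ico M m, v k < r) :
    ∀ m ≥ M, dist (x m) a < r := by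
  have hbound : ∀ m ≥ M, dist (x m) a ≤ dist (x M) a + ∑ k ∈ Finset.Ico M m, v k := by
    intro m hm
    induction m, hm using Nat.le_induction with
    | base => simp
    | succ m hm ih =>
      have hstep_m := hstep m hm (ih.trans_lt (hsmall m))
      rw [Finset.sum_Ico_succ_top hm]
      linarith [dist_triangle (x (m + 1)) (x m) a]
  exact fun m hm => (hbound m hm).trans_lt (hsmall m)

theorem tendsto_of_mapClusterPt_of_summable_dist_succ (hr : 0 < r) (hv : Summable v)
    (hcl : MapClusterPt a atTop x)
    (hstep : ∀ᶠ k in atTop, dist (x k) a < r → dist (x (k + 1)) (x k) ≤ v k) :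
    Tendsto x atTop (𝓝 a) := by
  refine Metric.tendsto_atTop.2 fun δ hδ => ?_
  set ρ := min δ r
  have hρ : 0 < ρ / 2 := half_pos (lt_min hδ hr)
  obtain ⟨K, hK⟩ := eventually_atTop.1 ((hv.eventually_forall_sum_Ico_lt hρ).and hstep)
  obtain ⟨M, hKM, hM⟩ :=
    (hcl.frequently (Metric.ball_mem_nhds a hρ)).forall_exists_of_atTop K
  have htrap : ∀ m ≥ M, dist (x m) a < ρ := by
    refine forall_dist_lt_of_sum_Ico_lt (v := v) (fun k hk hk_near => ?_) fun m => ?_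
    · exact (hK k (hKM.trans hk)).2 (hk_near.trans_le (min_le_right _ _))
    · linarith [(hK M hKM).1 m, Metric.mem_ball.1 hM]
  exact ⟨M, fun m hm => (htrap m hm).trans_le (min_le_left _ _)⟩

end PseudoMetricSpace

/-- Kiwiel's lemma: if `f` is bounded from below, `α ∈ (0,1)`,
and `f (x_{k+1}) ≤ f (x_k) - α ‖x_{k+1} - x_k‖ ‖g_k‖` for all `k`, then any
accumulation point `x̄` of `{x_k}` satisfies: either `x_k → x̄`, or
`liminf_k max {‖x_k - x̄‖, ‖g_k‖} = 0`. -/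
theorem descent_accumulation_dichotomy {n : ℕ}
    (f : EuclideanSpace ℝ (Fin n) → ℝ) (hbdd : BddBelow (Set.range f))
    (α : ℝ) (hα : α ∈ Set.Ioo (0 : ℝ) 1)
    (x g : ℕ → EuclideanSpace ℝ (Fin n))
    (hdesc : ∀ k, f (x (k + 1)) ≤ f (x k) - α * ‖x (k + 1) - x k‖ * ‖g k‖)
    (xbar : EuclideanSpace ℝ (Fin n))
    (hacc : ∃ φ : ℕ → ℕ, StrictMono φ ∧ Tendsto (fun j => x (φ j)) atTop (𝓝 xbar)) :
    Tendsto x atTop (𝓝 xbar) ∨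
      Filter.liminf (fun k => max ‖x k - xbar‖ ‖g k‖) atTop = 0 := by
  obtain ⟨φ, hφ, hφlim⟩ := hacc
  have hsum : Summable fun k => ‖x (k + 1) - x k‖ * ‖g k‖ :=
    summable_of_le_sub_mul hα.1 (fun k => by positivity)
      (hbdd.mono (range_comp_subset_range x f)) fun k => by simpa only [Function.comp_apply, mul_assoc] using hdesc k
  refine or_iff_not_imp_right.2 fun hliminf => ?_
  obtain ⟨ε, hε, hfar⟩ := exists_pos_eventually_le_of_liminf_ne_zero (fun k => by positivity) hliminf
  refine tendsto_of_mapClusterPt_of_summable_dist_succ hε (hsum.div_const ε)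
    (.of_comp hφ.tendsto_atTop hφlim.mapClusterPt) ?_
  filter_upwards [hfar] with k hk hnear
  have hg : ε ≤ ‖g k‖ := (le_max_iff.1 hk).resolve_left (by rwa [not_le, ← dist_eq_norm])
  rw [dist_eq_norm, le_div_iff₀ hε]
  exact mul_le_mul_of_nonneg_left hg (norm_nonneg _)
end
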